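/- arXiv:1509.04575 — 9 statements merged into one kernel-verified Lean document; each statement's English description precedes it below -/
import Mathlib

section
/- Let q, x_1, …, x_n be points in ℝ^d with x_i ≠ q for all i, and for each i let H_q(x_i) = { y ∈ ℝ^d : (y − q)·(x_i − q) ≥ |x_i − q|² }. Then ⋂_{i=1}^n H_q(x_i) = ∅ if and only if q ∈ conv{x_1, …, x_n}. -/
/-!
If `q` is a convex combination of the `x i`, then for every `y` the linear functional
`⟪y - q, ·⟫` is at most `⟪y - q, q⟫` at some `x i`, which puts `y` strictly on `q`'s side of
`H_q(x i)`. If `q` is not in the (closed) convex hull, a separating vector `v` has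
`⟪v, x i - q⟫ > 0` for all `i`, and `q + t • v` lies in every `H_q(x i)` once `t` is large.
-/

open Set Filter
open scoped RealInnerProductSpace

variable {E : Type*} [NormedAddCommGroup E] [InnerProductSpace ℝ E]

/-- The halfspace `H_q(x)`. -/
def halfspaceBeyond (q x : E) : Set E := {y | ‖x - q‖ ^ 2 ≤ ⟪y - q, x - q⟫}

theorem exists_inner_le_of_mem_convexHull {s : Set E} {q : E} (v : E)
    (hq : q ∈ convexHull ℝ s) : ∃ z ∈ s, ⟪v, z⟫ ≤ ⟪v, q⟫ :=
  ((innerₗ E v).concaveOn (convex_convexHull ℝ s)).exists_le_of_mem_convexHull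
    (subset_convexHull ℝ s) hq

theorem iInter_halfspaceBeyond_eq_empty_of_mem_convexHull {ι : Type*} {x : ι → E} {q : E}
    (hx : ∀ i, x i ≠ q) (hq : q ∈ convexHull ℝ (range x)) :
    ⋂ i, halfspaceBeyond q (x i) = ∅ := by
  refine eq_empty_of_forall_notMem fun y hy => ?_
  obtain ⟨_, ⟨i, rfl⟩, hi⟩ := exists_inner_le_of_mem_convexHull (y - q) hq
  have hpos : 0 < ‖x i - q‖ ^ 2 := by
    have := sub_ne_zero.2 (hx i)
    positivity
  have hle : ‖x i - q‖ ^ 2 ≤ ⟪y - q, x i - q⟫ := mem_iInter.1 hy i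
  rw [inner_sub_right] at hle
  linarith

theorem exists_forall_inner_sub_pos_of_notMem [CompleteSpace E] {C : Set E} {q : E}
    (hC : Convex ℝ C) (hCc : IsClosed C) (hq : q ∉ C) :
    ∃ v : E, ∀ z ∈ C, 0 < ⟪v, z - q⟫ := by
  obtain ⟨f, u, hfq, hfC⟩ := geometric_hahn_banach_point_closed hC hCc hq
  refine ⟨(InnerProductSpace.toDual ℝ E).symm f, fun z hz => ?_⟩
  rw [inner_sub_right, InnerProductSpace.toDual_symm_apply, InnerProductSpace.toDual_symm_apply]
  linarith [hfC z hz]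

theorem exists_forall_le_mul_of_pos {ι : Type*} [Finite ι] {a b : ι → ℝ}
    (ha : ∀ i, 0 < a i) : ∃ t : ℝ, ∀ i, b i ≤ t * a i :=
  (eventually_all.2 fun i =>
    (tendsto_id.atTop_mul_const (ha i)).eventually_ge_atTop (b i)).exists

theorem iInter_halfspaceBeyond_nonempty_of_notMem_convexHull [CompleteSpace E] {ι : Type*}
    [Finite ι] {x : ι → E} {q : E} (hq : q ∉ convexHull ℝ (range x)) :
    (⋂ i, halfspaceBeyond q (x i)).Nonempty := by
  obtain ⟨v, hv⟩ := exists_forall_inner_sub_pos_of_notMem (convex_convexHull ℝ _)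
    ((finite_range x).isClosed_convexHull ℝ) hq
  obtain ⟨t, ht⟩ := exists_forall_le_mul_of_pos (b := fun i => ‖x i - q‖ ^ 2)
    fun i => hv (x i) (subset_convexHull ℝ _ (mem_range_self i))
  refine ⟨q + t • v, mem_iInter.2 fun i => ?_⟩
  simpa [halfspaceBeyond, real_inner_smul_left] using ht i

theorem inter_halfspaces_empty_iff_mem_convexHull_general (d n : ℕ)
    (q : EuclideanSpace ℝ (Fin d)) (x : Fin n → EuclideanSpace ℝ (Fin d))
    (hx : ∀ i, x i ≠ q) :
    (⋂ i : Fin n,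
        {y : EuclideanSpace ℝ (Fin d) | ‖x i - q‖ ^ 2 ≤ (inner ℝ (y - q) (x i - q) : ℝ)}) = ∅ ↔
      q ∈ convexHull ℝ (Set.range x) := by
  change ⋂ i, halfspaceBeyond q (x i) = ∅ ↔ _
  refine ⟨fun hempty => ?_, iInter_halfspaceBeyond_eq_empty_of_mem_convexHull hx⟩
  by_contra hq
  exact (iInter_halfspaceBeyond_nonempty_of_notMem_convexHull hq).ne_empty hempty

/-- For `x i ≠ q`, let `H_q(x i) = {y : ⟪y - q, x i - q⟫ ≥ ‖x i - q‖²}` be the closed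
halfspace bounded by the hyperplane through `x i` perpendicular to the line through `x i`
and `q`, not containing `q`. Then `⋂ i, H_q(x i) = ∅` iff `q ∈ conv{x 1, …, x n}`. -/
theorem inter_halfspaces_empty_iff_mem_convexHull (d n : ℕ) (hn : 0 < n)
    (q : EuclideanSpace ℝ (Fin d)) (x : Fin n → EuclideanSpace ℝ (Fin d))
    (hx : ∀ i, x i ≠ q) :
    (⋂ i : Fin n,
        {y : EuclideanSpace ℝ (Fin d) | ‖x i - q‖ ^ 2 ≤ (inner ℝ (y - q) (x i - q) : ℝ)}) = ∅ ↔
      q ∈ convexHull ℝ (Set.range x) :=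
  inter_halfspaces_empty_iff_mem_convexHull_general d n q x hx
end

section
/- Let q ∈ ℝ², let ℓ be the horizontal line through q, and let x, y, z ∈ ℝ² be points such that x and z lie strictly below ℓ, y lies strictly above ℓ, and no three of the points q, x, y, z are collinear. Let h be a horizontal line strictly below both x and z, and for p ∈ {x, y, z} let p' denote the intersection point of the line through q and p with h. Then q ∈ conv{x, y, z} if and only if y' lies strictly between x' and z' on h. -/
/-!
Write `orient q p r` for twice the signed area of the triangle `q p r`. For `p` below `ℓ` and `r`
above it, the projection of `p` lies left of that of `r` exactly when `q p r` is clockwise, so the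
right side says that `q x y` and `q y z` have the same orientation. If `q = α x + β y + γ z` is a
convex combination, wedging `α (x - q) + β (y - q) + γ (z - q) = 0` with `y - q` gives
`α · orient q x y = γ · orient q y z`, which forces equal signs. Conversely, if both are positive,
then so is `orient q z x`, since `x, z` lie below `q` and `y` above it; the three orientations are
then proportional to the barycentric coordinates of `q` in the triangle `x y z`.
-/

/-- The first coordinate of the intersection point of the line through `q` and `p` with
the horizontal line `{x₂ = c}`. -/
noncomputable def projFst (q p : EuclideanSpace ℝ (Fin 2)) (c : ℝ) : ℝ :=
  q 0 + (c - q 1) / (p 1 - q 1) * (p 0 - q 0)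

theorem mem_convexHull_triple_iff {𝕜 E : Type*} [Field 𝕜] [LinearOrder 𝕜]
    [IsStrictOrderedRing 𝕜] [AddCommGroup E] [Module 𝕜 E] {a b c p : E} :
    p ∈ convexHull 𝕜 {a, b, c} ↔
      ∃ α β γ : 𝕜, 0 ≤ α ∧ 0 ≤ β ∧ 0 ≤ γ ∧ α + β + γ = 1 ∧ α • a + β • b + γ • c = p := by
  constructor
  · rw [convexHull_insert (Set.insert_nonempty b {c}), convexHull_pair, mem_convexJoin]
    rintro ⟨_, rfl, _, ⟨u, v, hu, hv, huv, rfl⟩, s, t, hs, ht, hst, rfl⟩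
    refine ⟨s, t * u, t * v, hs, mul_nonneg ht hu, mul_nonneg ht hv, ?_, ?_⟩
    · linear_combination hst + t * huv
    · simp only [smul_add, mul_smul, add_assoc]
  · rintro ⟨α, β, γ, hα, hβ, hγ, hsum, rfl⟩
    refine mem_convexHull_of_exists_fintype ![α, β, γ] ![a, b, c] ?_ ?_ ?_ ?_
    · intro i; fin_cases i <;> assumption
    · simpa [Fin.sum_univ_three] using hsum
    · intro i; fin_cases i <;> simp
    · simp [Fin.sum_univ_three, add_assoc]

/-- Twice the signed area of the triangle `q p r`; positive iff `q, p, r` run counterclockwise. -/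
noncomputable def orient (q p r : EuclideanSpace ℝ (Fin 2)) : ℝ :=
  (p 0 - q 0) * (r 1 - q 1) - (p 1 - q 1) * (r 0 - q 0)

section

variable {q p r x y z : EuclideanSpace ℝ (Fin 2)}

theorem orient_swap (q p r : EuclideanSpace ℝ (Fin 2)) : orient q p r = -orient q r p := by
  unfold orient; ring

theorem orient_add_orient_add_orient (q x y z : EuclideanSpace ℝ (Fin 2)) :
    orient q x y + orient q y z + orient q z x = orient x y z := by
  unfold orient; ring

theorem collinear_of_orient_eq_zero (h : orient q p r = 0) : Collinear ℝ {q, p, r} := by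
  by_cases hpq : p = q
  · subst hpq
    simpa using collinear_pair ℝ p r
  rw [collinear_iff_of_mem (Set.mem_insert q _)]
  refine ⟨p - q, ?_⟩
  simp only [Set.mem_insert_iff, Set.mem_singleton_iff, forall_eq_or_imp, forall_eq]
  refine ⟨⟨0, by simp⟩, ⟨1, by simp⟩, ?_⟩
  unfold orient at h
  have hne : p 0 - q 0 ≠ 0 ∨ p 1 - q 1 ≠ 0 := by
    by_contra! h0
    exact hpq (by ext i; fin_cases i <;> simp only [Fin.zero_eta, Fin.mk_one] <;> linarith)
  rcases hne with h0 | h1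
  · refine ⟨(r 0 - q 0) / (p 0 - q 0), ?_⟩
    ext i; fin_cases i <;>
      simp only [Fin.zero_eta, Fin.mk_one, vadd_eq_add, PiLp.add_apply, PiLp.smul_apply,
        PiLp.sub_apply, smul_eq_mul] <;> field_simp <;> linarith
  · refine ⟨(r 1 - q 1) / (p 1 - q 1), ?_⟩
    ext i; fin_cases i <;>
      simp only [Fin.zero_eta, Fin.mk_one, vadd_eq_add, PiLp.add_apply, PiLp.smul_apply,
        PiLp.sub_apply, smul_eq_mul] <;> field_simp <;> linarith

theorem projFst_sub_projFst (c : ℝ) (hp : p 1 ≠ q 1) (hr : r 1 ≠ q 1) :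
    projFst q r c - projFst q p c = (q 1 - c) / ((p 1 - q 1) * (r 1 - q 1)) * orient q p r := by
  have hp' : p 1 - q 1 ≠ 0 := sub_ne_zero.mpr hp
  have hr' : r 1 - q 1 ≠ 0 := sub_ne_zero.mpr hr
  unfold projFst orient
  field_simp
  ring

theorem projFst_lt_projFst_iff_orient_neg {c : ℝ} (hp : p 1 < q 1) (hr : q 1 < r 1)
    (hc : c < q 1) :
    projFst q p c < projFst q r c ↔ orient q p r < 0 := by
  have hK : (q 1 - c) / ((p 1 - q 1) * (r 1 - q 1)) < 0 :=
    div_neg_of_pos_of_neg (by linarith) (mul_neg_of_neg_of_pos (by linarith) (by linarith))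
  rw [← sub_pos, projFst_sub_projFst c hp.ne hr.ne', ← smul_eq_mul, smul_pos_iff_of_neg_left hK]

theorem projFst_lt_projFst_iff_orient_pos {c : ℝ} (hp : p 1 < q 1) (hr : q 1 < r 1)
    (hc : c < q 1) :
    projFst q r c < projFst q p c ↔ 0 < orient q p r := by
  have hK : (q 1 - c) / ((p 1 - q 1) * (r 1 - q 1)) < 0 :=
    div_neg_of_pos_of_neg (by linarith) (mul_neg_of_neg_of_pos (by linarith) (by linarith))
  rw [← sub_neg, projFst_sub_projFst c hp.ne hr.ne', ← smul_eq_mul, smul_neg_iff_of_neg_left hK]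

theorem mem_convexHull_of_orient_nonneg (hxy : 0 ≤ orient q x y) (hyz : 0 ≤ orient q y z)
    (hzx : 0 ≤ orient q z x) (hxyz : 0 < orient x y z) : q ∈ convexHull ℝ {x, y, z} := by
  rw [mem_convexHull_triple_iff]
  refine ⟨orient q y z / orient x y z, orient q z x / orient x y z, orient q x y / orient x y z,
    by positivity, by positivity, by positivity, ?_, ?_⟩
  · field_simp
    rw [← orient_add_orient_add_orient q x y z]
    ring
  · rw [← orient_add_orient_add_orient q x y z] at hxyz ⊢
    ext i
    fin_cases i <;>
      simp only [Fin.zero_eta, Fin.mk_one, PiLp.add_apply, PiLp.smul_apply, smul_eq_mul] <;>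
      field_simp <;> unfold orient <;> ring

theorem orient_mul_orient_pos_of_mem_convexHull (hq : q ∈ convexHull ℝ {x, y, z})
    (hxy : orient q x y ≠ 0) (hyz : orient q y z ≠ 0) : 0 < orient q x y * orient q y z := by
  obtain ⟨α, β, γ, hα, -, hγ, hsum, hcomb⟩ := mem_convexHull_triple_iff.mp hq
  have hq0 : α * x 0 + β * y 0 + γ * z 0 = q 0 := by simpa using congrArg (· 0) hcomb
  have hq1 : α * x 1 + β * y 1 + γ * z 1 = q 1 := by simpa using congrArg (· 1) hcomb
  have key : α * orient q x y = γ * orient q y z := by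
    unfold orient
    linear_combination (y 1 - q 1) * (hq0 - q 0 * hsum) - (y 0 - q 0) * (hq1 - q 1 * hsum)
  have hαγ : α = 0 → γ = 0 → False := by
    intro hα0 hγ0
    subst hα0 hγ0
    apply hxy
    unfold orient
    rw [show y 0 = q 0 by linear_combination hq0 - y 0 * hsum,
      show y 1 = q 1 by linear_combination hq1 - y 1 * hsum]
    ring
  have hγ' : 0 < γ := hγ.lt_of_ne' fun h0 => hαγ (by simpa [h0, hxy] using key) h0
  have hα' : 0 < α := hα.lt_of_ne' fun h0 => hαγ h0 (by simpa [h0, hyz] using key)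
  rw [← mul_pos_iff_of_pos_left hα', ← mul_assoc, key, mul_assoc]
  exact mul_pos hγ' (mul_self_pos.mpr hyz)

theorem mem_convexHull_of_orient_pos (hx : x 1 < q 1) (hz : z 1 < q 1) (hy : q 1 < y 1)
    (hxy : 0 < orient q x y) (hyz : 0 < orient q y z) : q ∈ convexHull ℝ {x, y, z} := by
  have heights : orient q y z * (x 1 - q 1) + orient q z x * (y 1 - q 1) +
      orient q x y * (z 1 - q 1) = 0 := by
    unfold orient; ring
  have hzx : 0 < orient q z x := by
    nlinarith [mul_neg_of_pos_of_neg hyz (sub_neg.mpr hx),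
      mul_neg_of_pos_of_neg hxy (sub_neg.mpr hz)]
  refine mem_convexHull_of_orient_nonneg hxy.le hyz.le hzx.le ?_
  rw [← orient_add_orient_add_orient q]
  positivity

theorem mem_convexHull_iff_orient_mul_pos (hx : x 1 < q 1) (hz : z 1 < q 1) (hy : q 1 < y 1)
    (hxy : orient q x y ≠ 0) (hyz : orient q y z ≠ 0) :
    q ∈ convexHull ℝ {x, y, z} ↔ 0 < orient q x y * orient q y z := by
  refine ⟨fun hq => orient_mul_orient_pos_of_mem_convexHull hq hxy hyz, fun h => ?_⟩
  rcases mul_pos_iff.mp h with ⟨hxy', hyz'⟩ | ⟨hxy', hyz'⟩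
  · exact mem_convexHull_of_orient_pos hx hz hy hxy' hyz'
  · have hq := mem_convexHull_of_orient_pos hz hx hy
      (by rwa [orient_swap, neg_pos]) (by rwa [orient_swap, neg_pos])
    rwa [Set.pair_comm, Set.insert_comm, Set.pair_comm] at hq

end

theorem mem_convexHull_iff_proj_between_general (q x y z : EuclideanSpace ℝ (Fin 2))
    (hx : x 1 < q 1) (hz : z 1 < q 1) (hy : q 1 < y 1)
    (h1 : ¬Collinear ℝ ({q, x, y} : Set (EuclideanSpace ℝ (Fin 2))))
    (h3 : ¬Collinear ℝ ({q, y, z} : Set (EuclideanSpace ℝ (Fin 2))))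
    (c : ℝ) (hcx : c < x 1) :
    q ∈ convexHull ℝ ({x, y, z} : Set (EuclideanSpace ℝ (Fin 2))) ↔
      (projFst q x c < projFst q y c ∧ projFst q y c < projFst q z c) ∨
      (projFst q z c < projFst q y c ∧ projFst q y c < projFst q x c) := by
  have hc : c < q 1 := hcx.trans hx
  rw [mem_convexHull_iff_orient_mul_pos hx hz hy (mt collinear_of_orient_eq_zero h1)
      (mt collinear_of_orient_eq_zero h3), mul_pos_iff,
    projFst_lt_projFst_iff_orient_neg hx hy hc, projFst_lt_projFst_iff_orient_pos hx hy hc,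
    projFst_lt_projFst_iff_orient_pos hz hy hc, projFst_lt_projFst_iff_orient_neg hz hy hc,
    orient_swap q z y, neg_pos, neg_lt_zero]
  tauto

/-- Let `x, z` lie strictly below the horizontal line through `q` and `y` strictly above it,
with no three of `q, x, y, z` collinear.  Projecting `x, y, z` from `q` onto a horizontal
line `h = {x₂ = c}` strictly below `x` and `z`, the point `q` lies in `conv{x, y, z}` iff
the projection of `y` lies strictly between the projections of `x` and `z` on `h`. -/
theorem mem_convexHull_iff_proj_between (q x y z : EuclideanSpace ℝ (Fin 2))
    (hx : x 1 < q 1) (hz : z 1 < q 1) (hy : q 1 < y 1)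
    (h1 : ¬Collinear ℝ ({q, x, y} : Set (EuclideanSpace ℝ (Fin 2))))
    (h2 : ¬Collinear ℝ ({q, x, z} : Set (EuclideanSpace ℝ (Fin 2))))
    (h3 : ¬Collinear ℝ ({q, y, z} : Set (EuclideanSpace ℝ (Fin 2))))
    (h4 : ¬Collinear ℝ ({x, y, z} : Set (EuclideanSpace ℝ (Fin 2))))
    (c : ℝ) (hcx : c < x 1) (hcz : c < z 1) :
    q ∈ convexHull ℝ ({x, y, z} : Set (EuclideanSpace ℝ (Fin 2))) ↔
      (projFst q x c < projFst q y c ∧ projFst q y c < projFst q z c) ∨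
      (projFst q z c < projFst q y c ∧ projFst q y c < projFst q x c) :=
  mem_convexHull_iff_proj_between_general q x y z hx hz hy h1 h3 c hcx
end

section
/- Let X be a finite set of n points in ℝ^d. Then there exists a point q ∈ ℝ^d such that every closed halfspace of ℝ^d containing q contains at least n/(d+1) points of X; that is, the Tukey depth satisfies τ_X(q) ≥ 1/(d+1). -/
open scoped Classical

/-!
Call `Y ⊆ X` large if it misses fewer than `#X / (d + 1)` points of `X`. Any `d + 1` large sets
share a point of `X`, since their complements cannot cover `X`; so by Helly's theorem the convex
hulls of all large sets have a common point `q`. If a closed halfspace containing `q` held fewer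
than `#X / (d + 1)` points, the points outside it would form a large set, whose convex hull lies in
the complementary open halfspace and yet contains `q`.
-/

open Finset Module

theorem Finset.exists_mem_forall_mem_of_mul_card_sdiff_lt {α : Type*} [DecidableEq α]
    {X : Finset α} {I : Finset (Finset α)} {k : ℕ} (hI : I.Nonempty) (hIk : #I ≤ k)
    (hlarge : ∀ Y ∈ I, k * #(X \ Y) < #X) : ∃ x ∈ X, ∀ Y ∈ I, x ∈ Y := by
  by_contra! hcover
  have hX_sub : X ⊆ I.biUnion (X \ ·) := fun x hx => by
    obtain ⟨Y, hY, hxY⟩ := hcover x hx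
    exact mem_biUnion.mpr ⟨Y, hY, mem_sdiff.mpr ⟨hx, hxY⟩⟩
  have hX_le : #X ≤ ∑ Y ∈ I, #(X \ Y) := (card_le_card hX_sub).trans card_biUnion_le
  have : k * #X < k * #X :=
    calc k * #X ≤ ∑ Y ∈ I, k * #(X \ Y) := by rw [← mul_sum]; exact Nat.mul_le_mul_left k hX_le
      _ < ∑ _Y ∈ I, #X := sum_lt_sum_of_nonempty hI hlarge
      _ = #I * #X := by rw [sum_const, smul_eq_mul]
      _ ≤ k * #X := Nat.mul_le_mul_right _ hIk
  exact this.false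

theorem exists_forall_mem_convexHull_of_mul_card_sdiff_lt {𝕜 E : Type*} [Field 𝕜]
    [LinearOrder 𝕜] [IsStrictOrderedRing 𝕜] [AddCommGroup E] [Module 𝕜 E] [FiniteDimensional 𝕜 E]
    [DecidableEq E] (X : Finset E) :
    ∃ q : E, ∀ Y ⊆ X, (finrank 𝕜 E + 1) * #(X \ Y) < #X → q ∈ convexHull 𝕜 (Y : Set E) := by
  set large := X.powerset.filter fun Y => (finrank 𝕜 E + 1) * #(X \ Y) < #X
  have hhelly : (⋂ Y ∈ large, convexHull 𝕜 (Y : Set E)).Nonempty := by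
    refine Convex.helly_theorem' (fun _ _ => convex_convexHull 𝕜 _) fun I hI hIcard => ?_
    rcases I.eq_empty_or_nonempty with rfl | hIne
    · simp
    obtain ⟨x, -, hx⟩ := exists_mem_forall_mem_of_mul_card_sdiff_lt hIne hIcard
      fun Y hY => (mem_filter.mp (hI hY)).2
    exact ⟨x, Set.mem_iInter₂.mpr fun Y hY => subset_convexHull 𝕜 _ (mem_coe.mpr (hx Y hY))⟩
  obtain ⟨q, hq⟩ := hhelly
  exact ⟨q, fun Y hYX hY => Set.mem_iInter₂.mp hq Y (mem_filter.mpr ⟨mem_powerset.mpr hYX, hY⟩)⟩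

/-- **Centerpoint theorem for Tukey depth** (Rado): there exists a point `q` such that
every closed halfspace containing `q` contains at least `n/(d+1)` points of `X`, i.e.
`τ_X(q) ≥ 1/(d+1)`. -/
theorem centerpoint_tukey (d : ℕ) (X : Finset (EuclideanSpace ℝ (Fin d))) :
    ∃ q : EuclideanSpace ℝ (Fin d),
      ∀ v : EuclideanSpace ℝ (Fin d), v ≠ 0 → ∀ c : ℝ, c ≤ (inner ℝ v q : ℝ) →
        (X.card : ℝ) / (d + 1) ≤ ((X.filter fun x => c ≤ (inner ℝ v x : ℝ)).card : ℝ) := by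
  obtain ⟨q, hq⟩ := exists_forall_mem_convexHull_of_mul_card_sdiff_lt (𝕜 := ℝ) X
  rw [finrank_euclideanSpace_fin] at hq
  refine ⟨q, fun v _ c hc => ?_⟩
  set below := X.filter fun x => ¬c ≤ (inner ℝ v x : ℝ)
  rw [div_le_iff₀ (by positivity)]
  by_contra! hfew
  have hq_below : q ∈ convexHull ℝ (below : Set (EuclideanSpace ℝ (Fin d))) := by
    refine hq below (filter_subset _ _) ?_
    rw [show below = _ from filter_not _ _, Finset.sdiff_sdiff_eq_self (filter_subset _ _)]
    exact_mod_cast (mul_comm _ _).trans_lt hfew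
  have hhalf : Convex ℝ {x : EuclideanSpace ℝ (Fin d) | (inner ℝ v x : ℝ) < c} :=
    convex_halfSpace_lt ⟨inner_add_right v, fun r x => real_inner_smul_right v x r⟩ c
  exact hc.not_gt <| convexHull_min (fun x hx => lt_of_not_ge (mem_filter.mp hx).2) hhalf hq_below
end

section
/- For every dimension d ≥ 1 there exists a constant c_d > 0 such that for every finite set X of n points in ℝ^d there exists a point q ∈ ℝ^d that is contained in the convex hulls of at least c_d·C(n, d+1) of the (d+1)-element subsets of X. -/
open scoped Classical

open scoped RealInnerProductSpace
open Finset Metric Module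

set_option maxHeartbeats 1000000

namespace SelectionAux
variable {d : ℕ}
local notation "E'" => EuclideanSpace ℝ (Fin d)

lemma obtuse {K : Set E'} (hK : Convex ℝ K) {q p : E'} (hp : p ∈ K)
    (hmin : ∀ w ∈ K, dist q p ≤ dist q w) {w : E'} (hw : w ∈ K) :
    ⟪q - p, w - p⟫ ≤ 0 := by
  by_contra hpos
  push_neg at hpos
  have hB0 : (0:ℝ) ≤ ‖w - p‖^2 := sq_nonneg _
  set t : ℝ := min 1 (⟪q - p, w - p⟫ / (‖w - p‖^2 + 1)) with htdef
  have ht0 : 0 < t := lt_min one_pos (div_pos hpos (by linarith))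
  have ht1 : t ≤ 1 := min_le_left _ _
  have htB : t * (‖w - p‖^2 + 1) ≤ ⟪q - p, w - p⟫ := by
    calc t * (‖w - p‖^2 + 1) ≤ (⟪q - p, w - p⟫ / (‖w - p‖^2 + 1)) * (‖w - p‖^2 + 1) :=
          mul_le_mul_of_nonneg_right (min_le_right _ _) (by linarith)
      _ = ⟪q - p, w - p⟫ := div_mul_cancel₀ _ (by linarith)
  have hzK : (1 - t) • p + t • w ∈ K := hK hp hw (by linarith) (le_of_lt ht0) (by ring)
  have hle := hmin _ hzK
  rw [dist_eq_norm, dist_eq_norm] at hle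
  have hrw : q - ((1 - t) • p + t • w) = (q - p) - t • (w - p) := by module
  rw [hrw] at hle
  have hexp : ‖(q - p) - t • (w - p)‖^2
      = ‖q - p‖^2 - 2*(t*⟪q - p, w - p⟫) + t^2*‖w - p‖^2 := by
    rw [norm_sub_sq_real, real_inner_smul_right, norm_smul, mul_pow, Real.norm_eq_abs, sq_abs]
  have hsq : ‖q - p‖^2 ≤ ‖(q - p) - t • (w - p)‖^2 :=
    pow_le_pow_left₀ (norm_nonneg _) hle 2
  have h1 : t * (t * (‖w - p‖^2 + 1)) ≤ t * ⟪q - p, w - p⟫ :=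
    mul_le_mul_of_nonneg_left htB (le_of_lt ht0)
  nlinarith [mul_pos ht0 hpos, sq_nonneg t]

lemma far_point {A : Finset E'} {q : E'} (p : E') (hq : q ∈ convexHull ℝ (A : Set E')) :
    ∃ x ∈ A, ⟪q - p, q - p⟫ ≤ ⟪q - p, x - p⟫ := by
  by_contra h
  push_neg at h
  have hconv : Convex ℝ {y : E' | ⟪q - p, y⟫ < ⟪q - p, q - p⟫ + ⟪q - p, p⟫} :=
    convex_halfSpace_lt
      ⟨fun a b => inner_add_right _ _ _, fun c y => real_inner_smul_right _ _ _⟩ _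
  have hsub : (A : Set E') ⊆
      {y : E' | ⟪q - p, y⟫ < ⟪q - p, q - p⟫ + ⟪q - p, p⟫} := by
    intro x hx
    have h1 := h x hx
    rw [inner_sub_right] at h1
    simp only [Set.mem_setOf_eq]
    linarith
  have h2 := convexHull_min hsub hconv hq
  rw [Set.mem_setOf_eq] at h2
  have h3 : ⟪q - p, q⟫ - ⟪q - p, p⟫ = ⟪q - p, q - p⟫ := (inner_sub_right _ _ _).symm
  linarith


lemma colorful (C : Fin (d + 1) → Finset E') (q : E')
    (hq : ∀ i, q ∈ convexHull ℝ ((C i : Set E'))) :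
    ∃ f : Fin (d + 1) → E', (∀ i, f i ∈ C i) ∧
      q ∈ convexHull ℝ ((Finset.image f Finset.univ : Finset E') : Set E') := by
  have hCne : ∀ i, (C i).Nonempty := by
    intro i
    rw [← Finset.coe_nonempty, ← convexHull_nonempty_iff (𝕜 := ℝ)]
    exact ⟨q, hq i⟩
  set P : Finset (Fin (d + 1) → E') := Fintype.piFinset C with hP
  have hPne : P.Nonempty := ⟨fun i => (hCne i).choose, by
    rw [hP, Fintype.mem_piFinset]; exact fun i => (hCne i).choose_spec⟩
  obtain ⟨f, hfP, hmin⟩ := P.exists_min_image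
    (fun g => infDist q (convexHull ℝ ((Finset.image g Finset.univ : Finset E') : Set E'))) hPne
  have hf : ∀ i, f i ∈ C i := (Fintype.mem_piFinset).mp hfP
  set t : Finset E' := Finset.image f Finset.univ with ht
  by_cases hqK : q ∈ convexHull ℝ (t : Set E')
  · exact ⟨f, hf, hqK⟩
  exfalso
  set K : Set E' := convexHull ℝ (t : Set E') with hK
  have hKconv : Convex ℝ K := convex_convexHull _ _
  have hKcpt : IsCompact K := t.finite_toSet.isCompact_convexHull ℝ
  have hKne : K.Nonempty := ⟨f 0, subset_convexHull ℝ _ (by simp [ht])⟩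
  obtain ⟨p, hpK, hpdist⟩ := hKcpt.exists_infDist_eq_dist hKne q
  have hδ : 0 < dist q p := by
    rw [← hpdist]
    exact (hKcpt.isClosed.notMem_iff_infDist_pos hKne).mp hqK
  have hqp : q - p ≠ 0 := by
    intro h
    rw [dist_eq_norm, h] at hδ; simp at hδ
  have hD : 0 < ⟪q - p, q - p⟫ := by
    rw [real_inner_self_eq_norm_sq]
    rw [dist_eq_norm] at hδ
    positivity
  have hminK : ∀ w ∈ K, dist q p ≤ dist q w := fun w hw =>
    hpdist ▸ infDist_le_dist_of_mem hw
  have hobt : ∀ w ∈ K, ⟪q - p, w - p⟫ ≤ 0 := fun w hw => obtuse hKconv hpK hminK hw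
  -- the image of `f` off an index `j`, as a superset of `t.erase (f j)`
  have himg : ∀ (j : Fin (d + 1)), ((t.erase (f j) : Finset E') : Set E') ⊆
      ((Finset.image f (Finset.univ.erase j) : Finset E') : Set E') := by
    intro j z hz
    rw [Finset.mem_coe, Finset.mem_erase] at hz
    obtain ⟨hzne, hzt⟩ := hz
    rw [ht, Finset.mem_image] at hzt
    obtain ⟨i, _, hi⟩ := hzt
    have hij : i ≠ j := fun h => hzne (by rw [← hi, h])
    exact Finset.mem_coe.mpr (Finset.mem_image.mpr ⟨i, Finset.mem_erase.mpr ⟨hij, Finset.mem_univ _⟩, hi⟩)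
  have hkey : ∃ j : Fin (d + 1),
      p ∈ convexHull ℝ ((Finset.image f (Finset.univ.erase j) : Finset E') : Set E') := by
    by_cases hinj : Function.Injective f
    · by_cases hai : AffineIndependent ℝ ((↑) : t → E')
      · -- affinely independent case: find a zero weight
        rw [hK, Finset.convexHull_eq] at hpK
        obtain ⟨w, hw0, hw1, hwc⟩ := hpK
        have hcm : ∑ y ∈ t, w y • y = p := by
          rw [← hwc, Finset.centerMass_eq_of_sum_1 _ _ hw1]; rfl
        have hzero : ∑ y ∈ t, w y • (y - p) = 0 := by
          rw [Finset.sum_congr rfl (fun y _ => smul_sub (w y) y p), Finset.sum_sub_distrib,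
            hcm, ← Finset.sum_smul, hw1, one_smul, sub_self]
        have hsum0 : ∑ y ∈ t, w y * ⟪q - p, y - p⟫ = 0 := by
          have h : ⟪q - p, ∑ y ∈ t, w y • (y - p)⟫ = 0 := by rw [hzero, inner_zero_right]
          rw [inner_sum] at h
          calc ∑ y ∈ t, w y * ⟪q - p, y - p⟫
              = ∑ y ∈ t, ⟪q - p, w y • (y - p)⟫ :=
                Finset.sum_congr rfl fun y _ => (real_inner_smul_right _ _ _).symm
            _ = 0 := h
        by_cases hzw : ∃ y0 ∈ t, w y0 = 0
        · obtain ⟨y0, hy0t, hwy0⟩ := hzw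
          have hsum1' : ∑ y ∈ t.erase y0, w y = 1 := by
            rw [Finset.sum_erase _ hwy0]; exact hw1
          have hcm' : (t.erase y0).centerMass w id = p := by
            rw [Finset.centerMass_eq_of_sum_1 _ _ hsum1']
            have he : ∑ y ∈ t.erase y0, w y • y = ∑ y ∈ t, w y • y :=
              Finset.sum_erase _ (by rw [hwy0, zero_smul])
            simpa [he] using hcm
          have hpmem : p ∈ convexHull ℝ ((t.erase y0 : Finset E') : Set E') := by
            rw [Finset.convexHull_eq]
            exact ⟨w, fun y hy => hw0 y (Finset.mem_of_mem_erase hy), hsum1', hcm'⟩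
          obtain ⟨j, _, hj⟩ := Finset.mem_image.mp (ht ▸ hy0t)
          exact ⟨j, convexHull_mono (hj ▸ himg j) hpmem⟩
        · exfalso
          push_neg at hzw
          have hwpos : ∀ y ∈ t, 0 < w y := fun y hy =>
            lt_of_le_of_ne (hw0 y hy) (Ne.symm (hzw y hy))
          have hterm0 : ∀ y ∈ t, w y * ⟪q - p, y - p⟫ = 0 := by
            intro y hy
            have hnp : ∀ z ∈ t, w z * ⟪q - p, z - p⟫ ≤ 0 := fun z hz =>
              mul_nonpos_of_nonneg_of_nonpos (hw0 z hz)
                (hobt z (subset_convexHull ℝ _ (Finset.mem_coe.mpr hz)))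
            exact (Finset.sum_eq_zero_iff_of_nonpos hnp).mp hsum0 y hy
          have hinner0 : ∀ y ∈ t, ⟪q - p, y - p⟫ = 0 := by
            intro y hy
            rcases mul_eq_zero.mp (hterm0 y hy) with h | h
            · exact absurd h (ne_of_gt (hwpos y hy))
            · exact h
          set φ : E' →ₗ[ℝ] ℝ := (innerSL ℝ (q - p)).toLinearMap with hφ
          have hφapp : ∀ z, φ z = ⟪q - p, z⟫ := fun z => rfl
          have hspan : vectorSpan ℝ ((t : Set E')) ≤ LinearMap.ker φ := by
            rw [vectorSpan_def, Submodule.span_le]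
            rintro v hv
            rw [Set.mem_vsub] at hv
            obtain ⟨a, ha, b, hb, rfl⟩ := hv
            rw [SetLike.mem_coe, LinearMap.mem_ker]
            have ha' : ⟪q - p, a - p⟫ = 0 := hinner0 a (Finset.mem_coe.mp ha)
            have hb' : ⟪q - p, b - p⟫ = 0 := hinner0 b (Finset.mem_coe.mp hb)
            rw [inner_sub_right] at ha' hb'
            show φ (a -ᵥ b) = 0
            rw [hφapp, vsub_eq_sub, inner_sub_right]
            linarith
          have hcardt : t.card = d + 1 := by
            rw [ht, Finset.card_image_of_injective _ hinj, Finset.card_univ, Fintype.card_fin]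
          have hfr : finrank ℝ (vectorSpan ℝ ((t : Set E'))) = d := by
            have hc : Fintype.card ↥t = d + 1 := by rw [Fintype.card_coe, hcardt]
            have h2 := hai.finrank_vectorSpan hc
            have h3 : vectorSpan ℝ (Set.range (Subtype.val : ↥t → E')) =
                vectorSpan ℝ ((t : Set E')) := by
              congr 1
              exact Subtype.range_coe
            rwa [h3] at h2
          have hker : d ≤ finrank ℝ (LinearMap.ker φ) :=
            le_trans (le_of_eq hfr.symm) (Submodule.finrank_mono hspan)
          have hrk := LinearMap.finrank_range_add_finrank_ker φ
          have hrpos : 0 < finrank ℝ (LinearMap.range φ) := by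
            have hne : φ (q - p) ≠ 0 := by rw [hφapp]; exact ne_of_gt hD
            rw [Module.finrank_pos_iff]
            exact ⟨⟨⟨φ (q - p), LinearMap.mem_range_self _ _⟩, 0, by
              simp only [ne_eq, Submodule.mk_eq_zero]; exact hne⟩⟩
          rw [finrank_euclideanSpace_fin] at hrk
          omega
      · -- affinely dependent: erase a point
        obtain ⟨⟨y0, hy0t⟩, hp'⟩ := Caratheodory.mem_convexHull_erase hai hpK
        have hy0im : y0 ∈ Finset.image f Finset.univ := ht ▸ hy0t
        obtain ⟨j, _, hj⟩ := Finset.mem_image.mp hy0im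
        have hp'' : p ∈ convexHull ℝ ((t.erase y0 : Finset E') : Set E') := hp'
        exact ⟨j, convexHull_mono (hj ▸ himg j) hp''⟩
    · -- not injective
      rw [Function.not_injective_iff] at hinj
      obtain ⟨j', j, hfjj, hne⟩ := hinj
      refine ⟨j', convexHull_mono ?_ hpK⟩
      intro z hz
      rw [Finset.mem_coe, ht, Finset.mem_image] at hz
      obtain ⟨i, _, hi⟩ := hz
      by_cases hij : i = j'
      · exact Finset.mem_coe.mpr (Finset.mem_image.mpr ⟨j,
          Finset.mem_erase.mpr ⟨Ne.symm hne, Finset.mem_univ _⟩, by rw [← hfjj, ← hij]; exact hi⟩)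
      · exact Finset.mem_coe.mpr (Finset.mem_image.mpr ⟨i,
          Finset.mem_erase.mpr ⟨hij, Finset.mem_univ _⟩, hi⟩)
  obtain ⟨j, hpj⟩ := hkey
  obtain ⟨x, hxC, hxfar⟩ := far_point p (hq j)
  set f' : Fin (d + 1) → E' := Function.update f j x with hf'
  have hf'P : f' ∈ P := by
    rw [hP, Fintype.mem_piFinset]
    intro i
    by_cases hij : i = j
    · subst hij; rw [hf', Function.update_self]; exact hxC
    · rw [hf', Function.update_of_ne hij]; exact hf i
  set K' : Set E' := convexHull ℝ ((Finset.image f' Finset.univ : Finset E') : Set E') with hK'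
  have hK'conv : Convex ℝ K' := convex_convexHull _ _
  have hpt' : p ∈ K' := by
    refine convexHull_mono ?_ hpj
    intro z hz
    rw [Finset.mem_coe, Finset.mem_image] at hz
    obtain ⟨i, hi, hiz⟩ := hz
    have hij : i ≠ j := (Finset.mem_erase.mp hi).1
    exact Finset.mem_coe.mpr (Finset.mem_image.mpr ⟨i, Finset.mem_univ _,
      by rw [hf', Function.update_of_ne hij]; exact hiz⟩)
  have hxt' : x ∈ K' := subset_convexHull ℝ _ (Finset.mem_coe.mpr
    (Finset.mem_image.mpr ⟨j, Finset.mem_univ _, by rw [hf', Function.update_self]⟩))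
  set s : ℝ := ⟪q - p, q - p⟫ / (⟪q - p, q - p⟫ + ‖x - p‖^2) with hs
  have hR0 : (0:ℝ) ≤ ‖x - p‖^2 := sq_nonneg _
  have hs0 : 0 < s := div_pos hD (by linarith)
  have hs1 : s ≤ 1 := (div_le_one (by linarith)).mpr (by linarith)
  have hsmul : s * (⟪q - p, q - p⟫ + ‖x - p‖^2) = ⟪q - p, q - p⟫ :=
    div_mul_cancel₀ _ (by linarith)
  have hzK' : (1 - s) • p + s • x ∈ K' := hK'conv hpt' hxt' (by linarith) (le_of_lt hs0) (by ring)
  have hdistz : dist q ((1 - s) • p + s • x) < dist q p := by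
    rw [dist_eq_norm, dist_eq_norm]
    have hrw : q - ((1 - s) • p + s • x) = (q - p) - s • (x - p) := by module
    rw [hrw]
    have hexp : ‖(q - p) - s • (x - p)‖^2
        = ‖q - p‖^2 - 2*(s*⟪q - p, x - p⟫) + s^2*‖x - p‖^2 := by
      rw [norm_sub_sq_real, real_inner_smul_right, norm_smul, mul_pow, Real.norm_eq_abs, sq_abs]
    have hDn : ⟪q - p, q - p⟫ = ‖q - p‖^2 := real_inner_self_eq_norm_sq _
    nlinarith [norm_nonneg ((q - p) - s • (x - p)), norm_nonneg (q - p),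
      mul_le_mul_of_nonneg_left hxfar (le_of_lt hs0), sq_nonneg s, mul_pos hs0 hD,
      mul_le_mul_of_nonneg_left hsmul.le (le_of_lt hs0)]
  have h1 := hmin f' hf'P
  have h2 : infDist q K' ≤ dist q ((1 - s) • p + s • x) := infDist_le_dist_of_mem hzK'
  rw [← hK', hpdist] at h1
  linarith


lemma small_subset {A : Finset E'} {q : E'} (hq : q ∈ convexHull ℝ (A : Set E')) :
    ∃ S : Finset E', S ⊆ A ∧ S.card ≤ d + 1 ∧ q ∈ convexHull ℝ (S : Set E') := by
  rw [convexHull_eq_union] at hq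
  simp only [Set.mem_iUnion] at hq
  obtain ⟨S, hSA, hSai, hqS⟩ := hq
  refine ⟨S, by exact_mod_cast hSA, ?_, hqS⟩
  calc S.card = Fintype.card ↥S := (Fintype.card_coe S).symm
    _ ≤ finrank ℝ (vectorSpan ℝ (Set.range (Subtype.val : ↥S → E'))) + 1 :=
        hSai.card_le_finrank_succ
    _ ≤ finrank ℝ (EuclideanSpace ℝ (Fin d)) + 1 :=
        Nat.add_le_add_right (Submodule.finrank_le _) 1
    _ = d + 1 := by rw [finrank_euclideanSpace_fin]

lemma centerpoint (X : Finset E') :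
    ∃ q : E', ∀ A : Finset E', A ⊆ X → (X.card - A.card) * (d + 1) < X.card →
      q ∈ convexHull ℝ (A : Set E') := by
  rcases Finset.eq_empty_or_nonempty X with rfl | hXne
  · exact ⟨0, fun A hA h => absurd h (by simp [Finset.subset_empty.mp hA])⟩
  set s : Finset (Finset E') :=
    X.powerset.filter (fun A => (X.card - A.card) * (d + 1) < X.card) with hs
  have hinter : (⋂ A ∈ s, convexHull ℝ (A : Set E')).Nonempty := by
    apply Convex.helly_theorem' (fun A _ => convex_convexHull ℝ _)
    intro I hIs hIcard
    rw [finrank_euclideanSpace_fin] at hIcard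
    set B : Finset E' := I.biUnion (fun A => X \ A) with hB
    have hBcard : B.card ≤ X.card - 1 := by
      calc B.card ≤ ∑ A ∈ I, (X \ A).card := Finset.card_biUnion_le
        _ ≤ I.card * ((X.card - 1) / (d + 1)) := by
            apply Finset.sum_le_card_nsmul
            intro A hA
            have hA' := hIs hA
            rw [hs, Finset.mem_filter, Finset.mem_powerset] at hA'
            obtain ⟨hAX, hAlt⟩ := hA'
            rw [Finset.card_sdiff_of_subset hAX, Nat.le_div_iff_mul_le (by omega : 0 < d + 1)]
            omega
        _ ≤ (d + 1) * ((X.card - 1) / (d + 1)) := Nat.mul_le_mul_right _ hIcard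
        _ ≤ X.card - 1 := by rw [mul_comm]; exact Nat.div_mul_le_self _ _
    have hXB : (X \ B).Nonempty := by
      have h1 : X.card ≤ (X \ B).card + B.card := Finset.card_le_card_sdiff_add_card
      have h2 : 0 < X.card := Finset.card_pos.mpr hXne
      rw [← Finset.card_pos]
      omega
    obtain ⟨x, hx⟩ := hXB
    rw [Finset.mem_sdiff] at hx
    refine ⟨x, ?_⟩
    rw [Set.mem_iInter₂]
    intro A hA
    apply subset_convexHull
    rw [Finset.mem_coe]
    by_contra hxA
    exact hx.2 (Finset.mem_biUnion.mpr ⟨A, hA, Finset.mem_sdiff.mpr ⟨hx.1, hxA⟩⟩)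
  obtain ⟨q, hq⟩ := hinter
  rw [Set.mem_iInter₂] at hq
  exact ⟨q, fun A hAX hAcond => hq A (by
    rw [hs, Finset.mem_filter, Finset.mem_powerset]; exact ⟨hAX, hAcond⟩)⟩

lemma extract (X : Finset E') (q : E')
    (hq : ∀ A : Finset E', A ⊆ X → (X.card - A.card) * (d + 1) < X.card →
      q ∈ convexHull ℝ (A : Set E')) :
    ∀ r : ℕ, r * ((d + 1) * (d + 1)) ≤ X.card →
      ∃ S : Fin r → Finset E', (∀ i, S i ⊆ X ∧ (S i).card ≤ d + 1 ∧
          q ∈ convexHull ℝ ((S i : Set E'))) ∧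
        ∀ i j, i ≠ j → Disjoint (S i) (S j) := by
  intro r
  induction r with
  | zero => exact fun _ => ⟨fun i => i.elim0, fun i => i.elim0, fun i => i.elim0⟩
  | succ r ih =>
    intro hr
    obtain ⟨S, hS, hdisj⟩ := ih (le_trans (Nat.mul_le_mul_right _ (Nat.le_succ r)) hr)
    set U : Finset E' := Finset.univ.biUnion (fun i => S i) with hU
    have hUX : U ⊆ X := Finset.biUnion_subset.mpr (fun i _ => (hS i).1)
    have hUcard : U.card ≤ r * (d + 1) := by
      calc U.card ≤ ∑ i : Fin r, (S i).card := Finset.card_biUnion_le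
        _ ≤ Finset.univ.card * (d + 1) :=
            Finset.sum_le_card_nsmul _ _ _ (fun i _ => (hS i).2.1)
        _ = r * (d + 1) := by rw [Finset.card_univ, Fintype.card_fin]
    have hUX' : U.card ≤ X.card := Finset.card_le_card hUX
    have hA : q ∈ convexHull ℝ ((X \ U : Finset E') : Set E') := by
      apply hq _ Finset.sdiff_subset
      rw [Finset.card_sdiff_of_subset hUX]
      have hrw : X.card - (X.card - U.card) = U.card := by omega
      rw [hrw]
      have h1 : U.card * (d + 1) ≤ (r * (d + 1)) * (d + 1) := Nat.mul_le_mul_right _ hUcard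
      have h2 : (r * (d + 1)) * (d + 1) < (r + 1) * ((d + 1) * (d + 1)) := by
        calc (r * (d + 1)) * (d + 1) = r * ((d + 1) * (d + 1)) := by ring
          _ < r * ((d + 1) * (d + 1)) + (d + 1) * (d + 1) :=
              Nat.lt_add_of_pos_right (Nat.mul_pos (Nat.succ_pos d) (Nat.succ_pos d))
          _ = (r + 1) * ((d + 1) * (d + 1)) := by ring
      exact lt_of_le_of_lt h1 (lt_of_lt_of_le h2 hr)
    obtain ⟨T, hTsub, hTcard, hTq⟩ := small_subset hA
    refine ⟨fun i => if h : (i : ℕ) < r then S ⟨i, h⟩ else T, ?_, ?_⟩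
    · intro i
      by_cases h : (i : ℕ) < r
      · simp only [h, dif_pos]; exact hS _
      · simp only [h, dif_neg, not_false_iff]
        exact ⟨hTsub.trans Finset.sdiff_subset, hTcard, hTq⟩
    · have hdisjT : ∀ (i : ℕ) (hi : i < r), Disjoint (S ⟨i, hi⟩) T := by
        intro i hi
        exact Finset.disjoint_left.mpr (fun a haS haT =>
          (Finset.mem_sdiff.mp (hTsub haT)).2
            (Finset.mem_biUnion.mpr ⟨⟨i, hi⟩, Finset.mem_univ _, haS⟩))
      intro i j hij
      by_cases hi : (i : ℕ) < r <;> by_cases hj : (j : ℕ) < r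
      · simp only [hi, hj, dif_pos]
        refine hdisj _ _ (fun h => hij (Fin.ext ?_))
        have := congrArg (fun z => (Fin.val z : ℕ)) h
        simpa using this
      · simp only [hi, hj, dif_pos, dif_neg, not_false_iff]
        exact hdisjT _ hi
      · simp only [hi, hj, dif_pos, dif_neg, not_false_iff]
        exact (hdisjT _ hj).symm
      · exact absurd (Fin.ext (by omega)) hij

lemma counting (X : Finset E') (q : E') (r : ℕ) (S : Fin r → Finset E')
    (hS : ∀ i, S i ⊆ X ∧ (S i).card ≤ d + 1 ∧ q ∈ convexHull ℝ ((S i : Set E')))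
    (hdisj : ∀ i j, i ≠ j → Disjoint (S i) (S j)) :
    r.choose (d + 1) ≤
      ((X.powersetCard (d + 1)).filter fun T : Finset (EuclideanSpace ℝ (Fin d)) =>
        q ∈ convexHull ℝ (T : Set (EuclideanSpace ℝ (Fin d)))).card := by
  have key : ∀ P ∈ (Finset.univ : Finset (Fin r)).powersetCard (d + 1),
      ∃ T ∈ (X.powersetCard (d + 1)).filter (fun T : Finset (EuclideanSpace ℝ (Fin d)) =>
          q ∈ convexHull ℝ (T : Set (EuclideanSpace ℝ (Fin d)))),
        (Finset.univ.filter fun i => ¬ Disjoint (S i) T) = P := by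
    intro P hP
    rw [Finset.mem_powersetCard] at hP
    obtain ⟨hPsub, hPcard⟩ := hP
    set σ := P.orderIsoOfFin hPcard with hσ
    obtain ⟨f, hfC, hfq⟩ := colorful (fun i => S (σ i)) q (fun i => (hS (σ i)).2.2)
    set T := Finset.image f Finset.univ with hT
    have hfinj : Function.Injective f := by
      intro i i' he
      by_contra hne
      have hσne : ((σ i : {x // x ∈ P}) : Fin r) ≠ ((σ i' : {x // x ∈ P}) : Fin r) :=
        fun h => hne (σ.injective (Subtype.ext h))
      exact (Finset.disjoint_left.mp (hdisj _ _ hσne) (hfC i)) (he ▸ hfC i')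
    have hTcard : T.card = d + 1 := by
      rw [hT, Finset.card_image_of_injective _ hfinj, Finset.card_univ, Fintype.card_fin]
    have hTX : T ⊆ X := by
      intro z hz
      rw [hT, Finset.mem_image] at hz
      obtain ⟨i, _, rfl⟩ := hz
      exact (hS (σ i)).1 (hfC i)
    refine ⟨T, ?_, ?_⟩
    · rw [Finset.mem_filter, Finset.mem_powersetCard]
      exact ⟨⟨hTX, hTcard⟩, hfq⟩
    · ext i
      simp only [Finset.mem_filter, Finset.mem_univ, true_and]
      constructor
      · intro hnd
        obtain ⟨z, hzS, hzT⟩ := Finset.not_disjoint_iff.mp hnd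
        rw [hT, Finset.mem_image] at hzT
        obtain ⟨i0, _, rfl⟩ := hzT
        have hieq : i = ((σ i0 : {x // x ∈ P}) : Fin r) := by
          by_contra hne
          exact (Finset.disjoint_left.mp (hdisj _ _ hne) hzS) (hfC i0)
        rw [hieq]
        exact (σ i0).2
      · intro hiP
        apply Finset.not_disjoint_iff.mpr
        refine ⟨f (σ.symm ⟨i, hiP⟩), ?_, ?_⟩
        · have h := hfC (σ.symm ⟨i, hiP⟩)
          rw [OrderIso.apply_symm_apply] at h
          exact h
        · rw [hT]; exact Finset.mem_image.mpr ⟨_, Finset.mem_univ _, rfl⟩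
  have hinj : Set.InjOn
      (fun P => if h : P ∈ (Finset.univ : Finset (Fin r)).powersetCard (d + 1) then
        (key P h).choose else ∅)
      ((Finset.univ : Finset (Fin r)).powersetCard (d + 1)) := by
    intro P1 h1 P2 h2 he
    rw [Finset.mem_coe] at h1 h2
    simp only [dif_pos h1, dif_pos h2] at he
    have e1 := (key P1 h1).choose_spec.2
    have e2 := (key P2 h2).choose_spec.2
    rw [← e1, ← e2, he]
  have hmaps : ∀ P ∈ (Finset.univ : Finset (Fin r)).powersetCard (d + 1),
      (if h : P ∈ (Finset.univ : Finset (Fin r)).powersetCard (d + 1) then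
        (key P h).choose else ∅) ∈
      (X.powersetCard (d + 1)).filter (fun T : Finset (EuclideanSpace ℝ (Fin d)) =>
        q ∈ convexHull ℝ (T : Set (EuclideanSpace ℝ (Fin d)))) := by
    intro P hP
    rw [dif_pos hP]
    exact (key P hP).choose_spec.1
  have hle := Finset.card_le_card_of_injOn _ hmaps hinj
  rwa [Finset.card_powersetCard, Finset.card_univ, Fintype.card_fin] at hle

lemma card_bind_filter (X : Finset E') (q : E') :
    ((X.powersetCard (d + 1)).filter fun T : Finset (EuclideanSpace ℝ (Fin d)) =>
        q ∈ convexHull ℝ (T : Set (EuclideanSpace ℝ (Fin d)))).card ≤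
    ((X.powersetCard (d + 1) >>=
        fun a => pure (↑a : Set (EuclideanSpace ℝ (Fin d)))).filter
        fun S => q ∈ convexHull ℝ S).card := by
  refine Finset.card_le_card_of_injOn
    (s := (X.powersetCard (d + 1)).filter fun T : Finset (EuclideanSpace ℝ (Fin d)) =>
        q ∈ convexHull ℝ (T : Set (EuclideanSpace ℝ (Fin d))))
    (t := (X.powersetCard (d + 1) >>=
        fun a => pure (↑a : Set (EuclideanSpace ℝ (Fin d)))).filter
        fun S => q ∈ convexHull ℝ S)
    (fun T => (↑T : Set (EuclideanSpace ℝ (Fin d)))) ?_ ?_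
  · intro T hT
    rw [Finset.mem_coe, Finset.mem_filter] at hT
    rw [Finset.mem_coe]
    refine Finset.mem_filter.mpr ⟨?_, hT.2⟩
    show (↑T : Set (EuclideanSpace ℝ (Fin d))) ∈
      (X.powersetCard (d + 1)).sup (fun a => {(↑a : Set (EuclideanSpace ℝ (Fin d)))})
    exact Finset.mem_sup.mpr ⟨T, hT.1, Finset.mem_singleton_self _⟩
  · intro a _ b _ h
    exact Finset.coe_injective h

lemma descfac_aux (K k r : ℕ) (hk : 1 ≤ k) (hkr : k ≤ r) :
    ∀ j, j ≤ k → (K * (r + 1)).descFactorial j ≤ (2 * K * k) ^ j * r.descFactorial j := by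
  intro j
  induction j with
  | zero => intro _; simp
  | succ j ih =>
    intro hj
    rw [Nat.descFactorial_succ, Nat.descFactorial_succ, pow_succ]
    have h1 := ih (Nat.le_of_succ_le hj)
    have hkey : K * (r + 1) - j ≤ 2 * K * k * (r - j) := by
      obtain ⟨m, rfl⟩ : ∃ m, r = k + m := ⟨r - k, by omega⟩
      have h5 : m + 1 ≤ k + m - j := by omega
      have h6 : m ≤ k * m := Nat.le_mul_of_pos_left m hk
      have h7 : k + m ≤ k * (m + 1) := by rw [Nat.mul_succ]; omega
      have h8 : k * (m + 1) ≤ k * (k + m - j) := Nat.mul_le_mul_left k h5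
      calc K * (k + m + 1) - j ≤ K * (k + m + 1) := Nat.sub_le _ _
        _ ≤ K * (2 * (k + m)) := Nat.mul_le_mul_left _ (by omega)
        _ = 2 * K * (k + m) := by ring
        _ ≤ 2 * K * (k * (k + m - j)) := Nat.mul_le_mul_left _ (le_trans h7 h8)
        _ = 2 * K * k * (k + m - j) := by ring
    calc (K * (r + 1) - j) * (K * (r + 1)).descFactorial j
        ≤ (2 * K * k * (r - j)) * ((2 * K * k) ^ j * r.descFactorial j) :=
          Nat.mul_le_mul hkey h1
      _ = (2 * K * k) ^ j * (2 * K * k) * ((r - j) * r.descFactorial j) := by ring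

lemma choose_scale (K k r n : ℕ) (hk : 1 ≤ k) (hkr : k ≤ r) (hn : n ≤ K * (r + 1)) :
    n.choose k ≤ (2 * K * k) ^ k * r.choose k := by
  have h1 : n.descFactorial k ≤ (2 * K * k) ^ k * r.descFactorial k :=
    le_trans (Nat.descFactorial_le k hn) (descfac_aux K k r hk hkr k le_rfl)
  rw [Nat.descFactorial_eq_factorial_mul_choose, Nat.descFactorial_eq_factorial_mul_choose] at h1
  have h2 : k.factorial * n.choose k ≤ k.factorial * ((2 * K * k) ^ k * r.choose k) := by
    calc k.factorial * n.choose k ≤ (2 * K * k) ^ k * (k.factorial * r.choose k) := h1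
      _ = k.factorial * ((2 * K * k) ^ k * r.choose k) := by ring
  exact Nat.le_of_mul_le_mul_left h2 (Nat.factorial_pos k)


end SelectionAux

/-- **Centerpoint theorem for simplicial depth (First Selection Lemma)**: there is a point
`q` contained in the convex hulls of at least `c_d · C(n, d+1)` of the `(d+1)`-element
subsets of `X`. -/
theorem centerpoint_simplicial (d : ℕ) (hd : 1 ≤ d) :
    ∃ c : ℝ, 0 < c ∧
      ∀ X : Finset (EuclideanSpace ℝ (Fin d)),
        ∃ q : EuclideanSpace ℝ (Fin d),
          c * (X.card.choose (d + 1) : ℝ) ≤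
            (((X.powersetCard (d + 1)).filter fun S =>
                q ∈ convexHull ℝ (S : Set (EuclideanSpace ℝ (Fin d)))).card : ℝ) := by
  classical
  set K : ℕ := (d + 1) * (d + 1) with hKdef
  have hK0 : 0 < K := Nat.mul_pos (Nat.succ_pos d) (Nat.succ_pos d)
  set M1 : ℕ := (2 * K * (d + 1)) ^ (d + 1) with hM1
  set M2 : ℕ := ((d + 1) * K).choose (d + 1) with hM2
  set M : ℕ := M1 + M2 + 1 with hM
  have hMpos : 0 < M := by omega
  have hMR : (0:ℝ) < (M:ℝ) := by exact_mod_cast hMpos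
  refine ⟨1 / (M:ℝ), by positivity, ?_⟩
  intro X
  by_cases hsmalln : X.card < d + 1
  · refine ⟨0, ?_⟩
    rw [Nat.choose_eq_zero_of_lt hsmalln]
    simp only [Nat.cast_zero, mul_zero]
    exact_mod_cast Nat.zero_le _
  push_neg at hsmalln
  obtain ⟨q, hq⟩ := SelectionAux.centerpoint X
  refine ⟨q, ?_⟩
  -- count at the Finset level
  set countF : ℕ := ((X.powersetCard (d + 1)).filter
      fun T : Finset (EuclideanSpace ℝ (Fin d)) =>
        q ∈ convexHull ℝ (T : Set (EuclideanSpace ℝ (Fin d)))).card with hcountF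
  have hcount1 : 1 ≤ countF := by
    have hqX : q ∈ convexHull ℝ (X : Set (EuclideanSpace ℝ (Fin d))) := by
      apply hq X Finset.Subset.rfl
      rw [Nat.sub_self, Nat.zero_mul]
      omega
    obtain ⟨S, hSX, hScard, hSq⟩ := SelectionAux.small_subset hqX
    obtain ⟨S', hSS', hS'X, hS'card⟩ := Finset.exists_subsuperset_card_eq hSX hScard hsmalln
    have hmem : S' ∈ (X.powersetCard (d + 1)).filter
        (fun T : Finset (EuclideanSpace ℝ (Fin d)) =>
          q ∈ convexHull ℝ (T : Set (EuclideanSpace ℝ (Fin d)))) := by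
      rw [Finset.mem_filter, Finset.mem_powersetCard]
      exact ⟨⟨hS'X, hS'card⟩, convexHull_mono (Finset.coe_subset.mpr hSS') hSq⟩
    rw [hcountF]
    exact Finset.card_pos.mpr ⟨S', hmem⟩
  set r : ℕ := X.card / K with hrdef
  have hrK : r * K ≤ X.card := Nat.div_mul_le_self _ _
  obtain ⟨S, hS, hdisj⟩ := SelectionAux.extract X q hq r hrK
  have hcountr : r.choose (d + 1) ≤ countF := SelectionAux.counting X q r S hS hdisj
  have hfinal : X.card.choose (d + 1) ≤ M * countF := by
    by_cases hbig : d + 1 ≤ r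
    · have hnle : X.card ≤ K * (r + 1) := by
        have h1 := Nat.div_add_mod X.card K
        have h2 := Nat.mod_lt X.card hK0
        have h3 : X.card = K * r + X.card % K := by rw [hrdef]; exact h1.symm
        calc X.card = K * r + X.card % K := h3
          _ ≤ K * r + K := Nat.add_le_add_left h2.le _
          _ = K * (r + 1) := by ring
      have h1 : X.card.choose (d + 1) ≤ M1 * (r.choose (d + 1)) := by
        rw [hM1]
        exact SelectionAux.choose_scale K (d + 1) r X.card (Nat.succ_le_succ (Nat.zero_le d))
          hbig hnle
      calc X.card.choose (d + 1) ≤ M1 * r.choose (d + 1) := h1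
        _ ≤ M * countF := Nat.mul_le_mul (by omega) hcountr
    · push_neg at hbig
      have hnlt : X.card < (d + 1) * K := by
        rw [← Nat.div_lt_iff_lt_mul hK0]
        exact hbig
      have h1 : X.card.choose (d + 1) ≤ M2 := by
        rw [hM2]
        exact Nat.choose_le_choose _ hnlt.le
      calc X.card.choose (d + 1) ≤ M2 := h1
        _ = M2 * 1 := (mul_one _).symm
        _ ≤ M * countF := Nat.mul_le_mul (by omega) hcount1
  have hbridge := SelectionAux.card_bind_filter X q
  have hfinal2 : X.card.choose (d + 1) ≤ M *
      ((X.powersetCard (d + 1) >>=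
        fun a => pure (↑a : Set (EuclideanSpace ℝ (Fin d)))).filter
        fun S => q ∈ convexHull ℝ S).card :=
    le_trans hfinal (Nat.mul_le_mul_left _ hbridge)
  have hcast : (X.card.choose (d + 1) : ℝ) ≤ (M:ℝ) *
      (((X.powersetCard (d + 1) >>=
        fun a => pure (↑a : Set (EuclideanSpace ℝ (Fin d)))).filter
        fun S => q ∈ convexHull ℝ S).card : ℝ) := by exact_mod_cast hfinal2
  calc (1 / (M:ℝ)) * (X.card.choose (d + 1) : ℝ)
      ≤ (1 / (M:ℝ)) * ((M:ℝ) *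
        (((X.powersetCard (d + 1) >>=
          fun a => pure (↑a : Set (EuclideanSpace ℝ (Fin d)))).filter
          fun S => q ∈ convexHull ℝ S).card : ℝ)) :=
        mul_le_mul_of_nonneg_left hcast (by positivity)
    _ = _ := by field_simp
end

section
/- For any integers d, m ≥ 1 there exists a constant c' = c'(d, m) > 0 such that the following holds. Let X_1, …, X_m be finite sets of points in ℝ^d. Then there exist subsets Y_1 ⊆ X_1, …, Y_m ⊆ X_m with |Y_i| ≥ c'·|X_i| for all i, such that every pair of m-tuples (z_1, …, z_m) and (z_1', …, z_m') with z_i, z_i' ∈ Y_i for all i have the same order type. -/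
/-- The determinant associated with the `(d+1)`-subtuple of `z` selected by `g`: the
determinant of the `(d+1) × (d+1)` matrix whose `j`-th column is the vector
`(z (g j), 1) ∈ ℝ^{d+1}`. -/
noncomputable def orientationDet {d m : ℕ} (z : Fin m → EuclideanSpace ℝ (Fin d))
    (g : Fin (d + 1) → Fin m) : ℝ :=
  (Matrix.of fun k j : Fin (d + 1) =>
    if h : (k : ℕ) < d then z (g j) ⟨k, h⟩ else 1).det

/-- Two `m`-tuples of points of `ℝ^d` have the same order type if for every increasing
index sequence `i_1 < … < i_{d+1}` the signs of the corresponding determinants agree. -/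
def SameOrderType {d m : ℕ} (z z' : Fin m → EuclideanSpace ℝ (Fin d)) : Prop :=
  ∀ g : Fin (d + 1) → Fin m, StrictMono g →
    Real.sign (orientationDet z g) = Real.sign (orientationDet z' g)

open Module Finset
open scoped RealInnerProductSpace

namespace SameTypeProof

variable {d : ℕ}

local notation "E" => EuclideanSpace ℝ (Fin d)

theorem centerpoint (A : Finset E) (hA : A.Nonempty) :
    ∃ q ∈ convexHull ℝ (A : Set E), ∀ v : E, ∀ c : ℝ, ⟪v, q⟫ ≤ c →
      A.card ≤ (d + 1) * (A.filter (fun x => ⟪v, x⟫ ≤ c)).card := by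
  classical
  set n := A.card with hn
  have hn1 : 1 ≤ n := Finset.card_pos.mpr hA
  set t := (n + d) / (d + 1) with htdef
  have hdm := Nat.div_add_mod (n + d) (d + 1)
  have hmod : (n + d) % (d + 1) < d + 1 := Nat.mod_lt _ (by omega)
  rw [← htdef] at hdm
  have ht1 : 1 ≤ t := (Nat.one_le_div_iff (by omega)).mpr (by omega)
  have htn : t ≤ n := by
    have h2 : n + d < (n + 1) * (d + 1) := by nlinarith
    have h3 := (Nat.div_lt_iff_lt_mul (by omega : 0 < d + 1)).mpr h2
    omega
  have hnt : n ≤ (d + 1) * t := by omega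
  have hbound : (d + 1) * (t - 1) ≤ n - 1 := by
    have hmul : (d + 1) * (t - 1) = (d + 1) * t - (d + 1) := by
      cases t with
      | zero => simp
      | succ k => rw [Nat.succ_sub_one, Nat.mul_succ]; omega
    omega
  -- the Helly family
  have hinter : ∀ I ⊆ A.powersetCard (n - t + 1), I.card ≤ finrank ℝ E + 1 →
      (⋂ S ∈ I, convexHull ℝ (S : Set E)).Nonempty := by
    intro I hI hIcard
    rw [finrank_euclideanSpace_fin] at hIcard
    have hsub : A.filter (fun x => ¬ ∀ S ∈ I, x ∈ S) ⊆ I.biUnion (fun S => A \ S) := by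
      intro x hx
      rw [Finset.mem_filter] at hx
      push_neg at hx
      obtain ⟨S, hS, hxS⟩ := hx.2
      exact Finset.mem_biUnion.mpr ⟨S, hS, Finset.mem_sdiff.mpr ⟨hx.1, hxS⟩⟩
    have hcard2 : (I.biUnion (fun S => A \ S)).card ≤ (d + 1) * (t - 1) := by
      calc (I.biUnion (fun S => A \ S)).card ≤ ∑ S ∈ I, (A \ S).card :=
            Finset.card_biUnion_le
        _ ≤ ∑ S ∈ I, (t - 1) := by
            apply Finset.sum_le_sum
            intro S hS
            have hS' := Finset.mem_powersetCard.mp (hI hS)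
            have := Finset.card_sdiff_of_subset hS'.1
            omega
        _ = I.card * (t - 1) := by rw [Finset.sum_const, smul_eq_mul]
        _ ≤ (d + 1) * (t - 1) := Nat.mul_le_mul_right _ hIcard
    have hBpos : 0 < (A.filter (fun x => ∀ S ∈ I, x ∈ S)).card := by
      have hsplit := Finset.card_filter_add_card_filter_not
        (s := A) (p := fun x => ∀ S ∈ I, x ∈ S)
      have := Finset.card_le_card hsub
      omega
    obtain ⟨x, hx⟩ := Finset.card_pos.mp hBpos
    rw [Finset.mem_filter] at hx
    refine ⟨x, Set.mem_iInter₂.mpr fun S hS => ?_⟩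
    exact subset_convexHull ℝ (S : Set E) (hx.2 S hS)
  have hhelly := Convex.helly_theorem' (𝕜 := ℝ) (F := fun S : Finset E => convexHull ℝ (S : Set E))
    (s := A.powersetCard (n - t + 1)) (fun S _ => convex_convexHull ℝ _) hinter
  obtain ⟨q, hq⟩ := hhelly
  rw [Set.mem_iInter₂] at hq
  obtain ⟨S₀, hS₀sub, hS₀card⟩ := Finset.exists_subset_card_eq (s := A) (n := n - t + 1) (by omega)
  have hS₀mem : S₀ ∈ A.powersetCard (n - t + 1) := Finset.mem_powersetCard.mpr ⟨hS₀sub, hS₀card⟩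
  have hqA : q ∈ convexHull ℝ (A : Set E) :=
    convexHull_mono (by exact_mod_cast hS₀sub) (hq S₀ hS₀mem)
  refine ⟨q, hqA, ?_⟩
  intro v c hvc
  by_contra hcon
  push_neg at hcon
  set r := (A.filter (fun x => ⟪v, x⟫ ≤ c)).card with hr
  have hrt : r < t := by
    have : (d + 1) * r < (d + 1) * t := by omega
    exact Nat.lt_of_mul_lt_mul_left this
  have hcompl : n - t + 1 ≤ (A.filter (fun x => ¬ ⟪v, x⟫ ≤ c)).card := by
    have hsplit := Finset.card_filter_add_card_filter_not
      (s := A) (p := fun x => ⟪v, x⟫ ≤ c)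
    omega
  obtain ⟨S', hS'sub, hS'card⟩ :=
    Finset.exists_subset_card_eq (n := n - t + 1) hcompl
  have hS'A : S' ⊆ A := hS'sub.trans (Finset.filter_subset _ _)
  have hS'mem : S' ∈ A.powersetCard (n - t + 1) := Finset.mem_powersetCard.mpr ⟨hS'A, hS'card⟩
  have hqS' := hq S' hS'mem
  have hhalf : convexHull ℝ (S' : Set E) ⊆ {x : E | c < ⟪v, x⟫} := by
    apply convexHull_min
    · intro x hx
      have := hS'sub (by exact_mod_cast hx)
      rw [Finset.mem_filter] at this
      exact lt_of_not_ge this.2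
    · exact convex_halfSpace_gt ⟨fun a b => inner_add_right v a b,
        fun r' a => real_inner_smul_right v a r'⟩ c
  exact absurd hvc (not_le.mpr (hhalf hqS'))


/-- The column matrix of a `(d+1)`-tuple of points. -/
noncomputable def colMat (w : Fin (d + 1) → E) : Matrix (Fin (d + 1)) (Fin (d + 1)) ℝ :=
  Matrix.of fun k j : Fin (d + 1) => if h : (k : ℕ) < d then w j ⟨k, h⟩ else 1

/-- The column vector of a point. -/
noncomputable def colVec (y : E) : Fin (d + 1) → ℝ :=
  fun k => if h : (k : ℕ) < d then y ⟨k, h⟩ else 1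

lemma colMat_apply (w : Fin (d + 1) → E) (k j : Fin (d + 1)) :
    colMat w k j = colVec (w j) k := rfl

/-- The padding linear map. -/
noncomputable def padMap : E →ₗ[ℝ] (Fin (d + 1) → ℝ) where
  toFun := fun x k => if h : (k : ℕ) < d then x ⟨k, h⟩ else 0
  map_add' := by
    intro x y
    funext k
    by_cases h : (k : ℕ) < d <;> simp [h]
  map_smul' := by
    intro c x
    funext k
    by_cases h : (k : ℕ) < d <;> simp [h]

lemma finrank_sup_le' (P Q : Submodule ℝ (Fin (d + 1) → ℝ)) :
    finrank ℝ ↥(P ⊔ Q) ≤ finrank ℝ P + finrank ℝ Q := by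
  have := Submodule.finrank_sup_add_finrank_inf_eq P Q
  omega

theorem det_eq_zero_of_confined (w : Fin (d + 1) → E) (T : Finset (Fin (d + 1)))
    (S : Set E)
    (hdim : finrank ℝ (vectorSpan ℝ S) + 2 ≤ T.card)
    (hw : ∀ j ∈ T, w j ∈ affineSpan ℝ S) :
    (colMat w).det = 0 := by
  classical
  have hTne : T.Nonempty := Finset.card_pos.mp (by omega)
  obtain ⟨j₁, hj₁⟩ := hTne
  have hSne : S.Nonempty := by
    by_contra hS
    rw [Set.not_nonempty_iff_eq_empty] at hS
    have := hw j₁ hj₁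
    rw [hS] at this
    rw [← AffineSubspace.mem_coe] at this
    simp at this
  obtain ⟨p, hp⟩ := hSne
  set u : Fin (d + 1) → (Fin (d + 1) → ℝ) := fun j => colVec (w j) with hu
  set N : Submodule ℝ (Fin (d + 1) → ℝ) :=
    (Submodule.span ℝ {colVec p} ⊔ (vectorSpan ℝ S).map padMap) ⊔
      Submodule.span ℝ ((univ \ T).image u : Set (Fin (d + 1) → ℝ)) with hN
  have hmem : ∀ j, u j ∈ N := by
    intro j
    by_cases hj : j ∈ T
    · have hwj : w j -ᵥ p ∈ vectorSpan ℝ S := by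
        rw [← direction_affineSpan ℝ S]
        exact AffineSubspace.vsub_mem_direction (hw j hj)
          (mem_affineSpan ℝ hp)
      have heq : u j = colVec p + padMap (w j - p) := by
        funext k
        by_cases h : (k : ℕ) < d
        · simp [hu, colVec, padMap, h, PiLp.sub_apply]
        · simp [hu, colVec, padMap, h]
      rw [heq]
      apply Submodule.mem_sup_left
      exact Submodule.add_mem _
        (Submodule.mem_sup_left (Submodule.mem_span_singleton_self _))
        (Submodule.mem_sup_right (Submodule.mem_map_of_mem hwj))
    · apply Submodule.mem_sup_right
      apply Submodule.subset_span
      exact_mod_cast Finset.mem_image_of_mem u (by simp [hj])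
  have hrank : finrank ℝ N ≤ d := by
    have h1 : finrank ℝ (Submodule.span ℝ ({colVec p} : Set (Fin (d+1) → ℝ))) ≤ 1 := by
      rcases eq_or_ne (colVec p) 0 with h | h
      · rw [h, Submodule.span_zero_singleton]
        simp
      · rw [finrank_span_singleton h]
    have h2 : finrank ℝ ((vectorSpan ℝ S).map padMap) ≤ T.card - 2 := by
      have := Submodule.finrank_map_le padMap (vectorSpan ℝ S)
      omega
    have h3 : finrank ℝ (Submodule.span ℝ (((univ \ T).image u : Finset _) : Set (Fin (d+1) → ℝ)))
        ≤ d + 1 - T.card := by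
      have hc := finrank_span_finset_le_card (R := ℝ) ((univ \ T).image u)
      rw [Set.finrank] at hc
      have : ((univ \ T).image u).card ≤ d + 1 - T.card := by
        have := Finset.card_image_le (s := univ \ T) (f := u)
        have hcs : (univ \ T).card = d + 1 - T.card := by
          rw [Finset.card_sdiff_of_subset (Finset.subset_univ T)]
          simp
        omega
      omega
    have hT1 : T.card ≤ d + 1 := by
      have := Finset.card_le_card (Finset.subset_univ T)
      simpa using this
    calc finrank ℝ N ≤ _ + _ := finrank_sup_le' _ _
      _ ≤ (finrank ℝ (Submodule.span ℝ {colVec p}) + finrank ℝ ((vectorSpan ℝ S).map padMap))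
          + (d + 1 - T.card) := by
          have := finrank_sup_le' (Submodule.span ℝ {colVec p}) ((vectorSpan ℝ S).map padMap)
          omega
      _ ≤ d := by omega
  have hnli : ¬ LinearIndependent ℝ u := by
    intro hli
    have hli' : LinearIndependent ℝ (fun j => (⟨u j, hmem j⟩ : N)) := by
      apply LinearIndependent.of_comp N.subtype
      exact hli
    have := hli'.fintype_card_le_finrank
    simp only [Fintype.card_fin] at this
    omega
  obtain ⟨g, hsum, j₀, hj₀⟩ := Fintype.not_linearIndependent_iff.mp hnli
  have hg : g ≠ 0 := by
    intro h
    rw [h] at hj₀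
    exact hj₀ rfl
  have hmv : (colMat w).mulVec g = 0 := by
    funext k
    have := congrArg (fun f => f k) hsum
    simp only [Finset.sum_apply, Pi.smul_apply, smul_eq_mul, Pi.zero_apply] at this
    simp only [Matrix.mulVec, dotProduct, colMat_apply, Pi.zero_apply]
    rw [← this]
    apply Finset.sum_congr rfl
    intro j _
    ring
  exact Matrix.exists_mulVec_eq_zero_iff.mp ⟨g, hg, hmv⟩

theorem det_ne_zero_of_sep (C : Fin (d + 1) → Finset E)
    (hsep : ∀ s : Fin (d + 1) → Bool, ∃ v : E, ∃ t : ℝ, ∀ j, ∀ x ∈ C j,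
      if s j then ⟪v, x⟫ < t else t < ⟪v, x⟫)
    (w : Fin (d + 1) → E) (hw : ∀ j, w j ∈ convexHull ℝ ((C j : Set E))) :
    (colMat w).det ≠ 0 := by
  classical
  intro h0
  obtain ⟨g, hg, hmv⟩ := Matrix.exists_mulVec_eq_zero_iff.mpr h0
  -- the coordinates relations
  have hrow : ∀ k : Fin (d + 1), ∑ j, colVec (w j) k * g j = 0 := by
    intro k
    have := congrArg (fun f => f k) hmv
    simpa [Matrix.mulVec, dotProduct, colMat_apply] using this
  have hsumg : ∑ j, g j = 0 := by
    have := hrow ⟨d, Nat.lt_succ_self d⟩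
    simpa [colVec] using this
  set P := univ.filter (fun j => 0 < g j) with hP
  set Nn := univ.filter (fun j => g j < 0) with hNn
  have hPne : P.Nonempty := by
    by_contra h
    rw [Finset.not_nonempty_iff_eq_empty] at h
    have hall : ∀ j ∈ univ, g j ≤ 0 := by
      intro j _
      by_contra hj
      have : j ∈ P := by simp [hP, lt_of_not_ge hj]
      rw [h] at this
      simp at this
    have := (Finset.sum_eq_zero_iff_of_nonpos hall).mp hsumg
    exact hg (funext fun j => this j (mem_univ j))
  have hNne : Nn.Nonempty := by
    by_contra h
    rw [Finset.not_nonempty_iff_eq_empty] at h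
    have hall : ∀ j ∈ univ, 0 ≤ g j := by
      intro j _
      by_contra hj
      have : j ∈ Nn := by simp [hNn, lt_of_not_ge hj]
      rw [h] at this
      simp at this
    have := (Finset.sum_eq_zero_iff_of_nonneg hall).mp hsumg
    exact hg (funext fun j => this j (mem_univ j))
  -- the separating functional for the sign pattern of g
  obtain ⟨v, t, hvt⟩ := hsep (fun j => decide (0 < g j))
  have hhullP : ∀ j ∈ P, ⟪v, w j⟫ < t := by
    intro j hj
    rw [hP, Finset.mem_filter] at hj
    have hsub : convexHull ℝ ((C j : Set E)) ⊆ {x : E | ⟪v, x⟫ < t} := by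
      apply convexHull_min
      · intro x hx
        have := hvt j x (by exact_mod_cast hx)
        simpa [hj.2] using this
      · exact convex_halfSpace_lt ⟨fun a b => inner_add_right v a b,
          fun r' a => real_inner_smul_right v a r'⟩ t
    exact hsub (hw j)
  have hhullN : ∀ j ∈ Nn, t < ⟪v, w j⟫ := by
    intro j hj
    rw [hNn, Finset.mem_filter] at hj
    have hgj : ¬ (0 < g j) := by linarith [hj.2]
    have hsub : convexHull ℝ ((C j : Set E)) ⊆ {x : E | t < ⟪v, x⟫} := by
      apply convexHull_min
      · intro x hx
        have := hvt j x (by exact_mod_cast hx)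
        simpa [hgj] using this
      · exact convex_halfSpace_gt ⟨fun a b => inner_add_right v a b,
          fun r' a => real_inner_smul_right v a r'⟩ t
    exact hsub (hw j)
  -- vector sum relations
  have hvecsum : ∑ j, g j • w j = 0 := by
    ext k
    have hthis := hrow ⟨(k : ℕ), Nat.lt_succ_of_lt k.isLt⟩
    simp only [colVec, k.isLt, dif_pos, Fin.eta] at hthis
    have hs : (∑ j, g j • w j) k = ∑ j, g j * (w j) k := by
      rw [WithLp.ofLp_sum, Finset.sum_apply]
      apply Finset.sum_congr rfl
      intro j _
      simp [PiLp.smul_apply]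
    rw [show (0 : EuclideanSpace ℝ (Fin d)) k = 0 from rfl, hs, ← hthis]
    apply Finset.sum_congr rfl
    intro j _
    ring
  have hsplit : ∑ j ∈ P, g j • w j + ∑ j ∈ Nn, g j • w j = 0 := by
    have hdisj : Disjoint P Nn := by
      rw [Finset.disjoint_left]
      intro j hj hj'
      rw [hP, Finset.mem_filter] at hj
      rw [hNn, Finset.mem_filter] at hj'
      linarith [hj.2, hj'.2]
    rw [← Finset.sum_union hdisj, ← hvecsum]
    apply Finset.sum_subset (Finset.subset_univ _)
    intro j _ hj
    have h1 : ¬ 0 < g j := by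
      intro h
      exact hj (Finset.mem_union_left _ (by simp [hP, h]))
    have h2 : ¬ g j < 0 := by
      intro h
      exact hj (Finset.mem_union_right _ (by simp [hNn, h]))
    have : g j = 0 := le_antisymm (le_of_not_gt h1) (le_of_not_gt h2)
    rw [this, zero_smul]
  have hsumgP : ∑ j ∈ P, g j + ∑ j ∈ Nn, g j = 0 := by
    have hdisj : Disjoint P Nn := by
      rw [Finset.disjoint_left]
      intro j hj hj'
      rw [hP, Finset.mem_filter] at hj
      rw [hNn, Finset.mem_filter] at hj'
      linarith [hj.2, hj'.2]
    rw [← Finset.sum_union hdisj, ← hsumg]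
    apply Finset.sum_subset (Finset.subset_univ _)
    intro j _ hj
    have h1 : ¬ 0 < g j := by
      intro h
      exact hj (Finset.mem_union_left _ (by simp [hP, h]))
    have h2 : ¬ g j < 0 := by
      intro h
      exact hj (Finset.mem_union_right _ (by simp [hNn, h]))
    linarith [le_of_not_gt h1, le_of_not_gt h2]
  set L := ∑ j ∈ P, g j with hL
  have hLpos : 0 < L := by
    apply Finset.sum_pos _ hPne
    intro j hj
    rw [hP, Finset.mem_filter] at hj
    exact hj.2
  -- compute the inner product of v with the common vector two ways
  have h1 : ⟪v, ∑ j ∈ P, g j • w j⟫ < L * t := by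
    rw [inner_sum]
    have : L * t = ∑ j ∈ P, g j * t := by rw [← Finset.sum_mul]
    rw [this]
    apply Finset.sum_lt_sum_of_nonempty hPne
    intro j hj
    rw [real_inner_smul_right]
    have hgj : 0 < g j := by
      rw [hP, Finset.mem_filter] at hj
      exact hj.2
    exact (mul_lt_mul_iff_right₀ hgj).mpr (hhullP j hj)
  have h2 : L * t < ⟪v, ∑ j ∈ P, g j • w j⟫ := by
    have heq : ∑ j ∈ P, g j • w j = ∑ j ∈ Nn, (-g j) • w j := by
      have h3 : ∑ j ∈ Nn, (-g j) • w j = -∑ j ∈ Nn, g j • w j := by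
        rw [← Finset.sum_neg_distrib]
        exact Finset.sum_congr rfl fun j _ => neg_smul (g j) (w j)
      rw [h3]
      exact eq_neg_of_add_eq_zero_left hsplit
    rw [heq, inner_sum]
    have hLt : L * t = ∑ j ∈ Nn, (-g j) * t := by
      rw [← Finset.sum_mul]
      congr 1
      rw [Finset.sum_neg_distrib]
      linarith [hsumgP]
    rw [hLt]
    apply Finset.sum_lt_sum_of_nonempty hNne
    intro j hj
    rw [real_inner_smul_right]
    have hgj : g j < 0 := by
      rw [hNn, Finset.mem_filter] at hj
      exact hj.2
    have hpos : 0 < -g j := by linarith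
    exact (mul_lt_mul_iff_right₀ hpos).mpr (hhullN j hj)
  linarith

lemma colMat_update (w : Fin (d + 1) → E) (j₀ : Fin (d + 1)) (y : E) :
    colMat (Function.update w j₀ y) = (colMat w).updateCol j₀ (colVec y) := by
  ext k j
  rw [Matrix.updateCol_apply]
  by_cases h : j = j₀
  · rw [if_pos h, h]
    simp [colMat_apply, Function.update_self]
  · rw [if_neg h]
    simp [colMat_apply, Function.update_of_ne h]

lemma colVec_combo (x y : E) (a b : ℝ) (hab : a + b = 1) :
    colVec ((a • x + b • y : E)) = a • colVec x + b • colVec y := by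
  funext k
  by_cases h : (k : ℕ) < d
  · simp [colVec, h, PiLp.add_apply, PiLp.smul_apply]
  · simp [colVec, h]
    linarith

lemma sign_step (C : Fin (d + 1) → Finset E)
    (NV : ∀ w : Fin (d + 1) → E, (∀ j, w j ∈ convexHull ℝ ((C j : Set E))) →
      (colMat w).det ≠ 0)
    (w : Fin (d + 1) → E) (hw : ∀ j, w j ∈ convexHull ℝ ((C j : Set E)))
    (j₀ : Fin (d + 1)) (y : E) (hy : y ∈ convexHull ℝ ((C j₀ : Set E))) :
    Real.sign ((colMat w).det) = Real.sign ((colMat (Function.update w j₀ y)).det) := by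
  classical
  have hw' : ∀ j, (Function.update w j₀ y) j ∈ convexHull ℝ ((C j : Set E)) := by
    intro j
    rw [Function.update_apply]
    by_cases h : j = j₀
    · rw [if_pos h, h]
      exact hy
    · rw [if_neg h]
      exact hw j
  set a := (colMat w).det with ha
  set b := (colMat (Function.update w j₀ y)).det with hb
  have haz : a ≠ 0 := NV w hw
  have hbz : b ≠ 0 := NV _ hw'
  -- if signs differ, find a vanishing point in between
  have hkey : a * b < 0 → False := by
    intro hab
    have hne : a - b ≠ 0 := by
      intro h
      have hab' : a = b := by linarith
      rw [hab'] at hab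
      exact absurd hab (not_lt.mpr (mul_self_nonneg b))
    set μ := a / (a - b) with hμ
    have hμ0 : 0 < μ := by
      rcases mul_neg_iff.mp hab with ⟨ha', hb'⟩ | ⟨ha', hb'⟩
      · apply div_pos ha'
        linarith
      · apply div_pos_of_neg_of_neg ha'
        linarith
    have hμ1 : μ < 1 := by
      have hdiff : μ - 1 = b / (a - b) := by
        rw [hμ]
        field_simp
        ring
      have hneg : b / (a - b) < 0 := by
        rcases mul_neg_iff.mp hab with ⟨ha', hb'⟩ | ⟨ha', hb'⟩
        · exact div_neg_of_neg_of_pos hb' (by linarith)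
        · exact div_neg_of_pos_of_neg hb' (by linarith)
      linarith
    have hcomb : (1 - μ) * a + μ * b = 0 := by
      rw [hμ]
      field_simp
      ring
    set y'' := ((1 - μ) • (w j₀) + μ • y : E) with hy''
    have hy''mem : y'' ∈ convexHull ℝ ((C j₀ : Set E)) :=
      (convex_convexHull ℝ _) (hw j₀) hy (by linarith) (by linarith) (by ring)
    have hdet : (colMat (Function.update w j₀ y'')).det = (1 - μ) * a + μ * b := by
      rw [colMat_update, hy'', colVec_combo _ _ _ _ (by ring)]
      rw [Matrix.det_updateCol_add, Matrix.det_updateCol_smul, Matrix.det_updateCol_smul]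
      have h1 : (colMat w).updateCol j₀ (colVec (w j₀)) = colMat w := by
        have : colVec (w j₀) = fun k => colMat w k j₀ := rfl
        rw [this, Matrix.updateCol_eq_self]
      have h2 : (colMat w).updateCol j₀ (colVec y) = colMat (Function.update w j₀ y) := by
        rw [colMat_update]
      rw [h1, h2, ← ha, ← hb]
    have hupdmem : ∀ j, (Function.update w j₀ y'') j ∈ convexHull ℝ ((C j : Set E)) := by
      intro j
      rw [Function.update_apply]
      by_cases h : j = j₀
      · rw [if_pos h, h]
        exact hy''mem
      · rw [if_neg h]
        exact hw j
    exact NV _ hupdmem (by rw [hdet, hcomb])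
  rcases lt_or_gt_of_ne haz with ha' | ha' <;> rcases lt_or_gt_of_ne hbz with hb' | hb'
  · rw [Real.sign_of_neg ha', Real.sign_of_neg hb']
  · exact absurd (mul_neg_of_neg_of_pos ha' hb') (fun h => hkey h)
  · exact absurd (mul_neg_of_pos_of_neg ha' hb') (fun h => hkey h)
  · rw [Real.sign_of_pos ha', Real.sign_of_pos hb']

lemma sign_const (C : Fin (d + 1) → Finset E)
    (NV : ∀ w : Fin (d + 1) → E, (∀ j, w j ∈ convexHull ℝ ((C j : Set E))) →
      (colMat w).det ≠ 0)
    (w w' : Fin (d + 1) → E) (hw : ∀ j, w j ∈ convexHull ℝ ((C j : Set E)))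
    (hw' : ∀ j, w' j ∈ convexHull ℝ ((C j : Set E))) :
    Real.sign ((colMat w).det) = Real.sign ((colMat w').det) := by
  classical
  set hyb : ℕ → Fin (d + 1) → E := fun k j => if (j : ℕ) < k then w' j else w j with hhyb
  have hybmem : ∀ k, ∀ j, hyb k j ∈ convexHull ℝ ((C j : Set E)) := by
    intro k j
    by_cases h : (j : ℕ) < k
    · simp only [hhyb]
      rw [if_pos h]
      exact hw' j
    · simp only [hhyb]
      rw [if_neg h]
      exact hw j
  have main : ∀ k, k ≤ d + 1 → Real.sign ((colMat w).det) = Real.sign ((colMat (hyb k)).det) := by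
    intro k
    induction k with
    | zero =>
      intro _
      have h0 : hyb 0 = w := by
        funext j
        simp [hhyb]
      rw [h0]
    | succ k ih =>
      intro hk
      have hk' : k < d + 1 := hk
      have hupd : hyb (k + 1) = Function.update (hyb k) ⟨k, hk'⟩ (w' ⟨k, hk'⟩) := by
        funext j
        rw [Function.update_apply]
        by_cases h : j = (⟨k, hk'⟩ : Fin (d + 1))
        · rw [if_pos h, h]
          simp [hhyb]
        · rw [if_neg h]
          have hjk : (j : ℕ) ≠ k := fun hc => h (Fin.ext hc)
          by_cases h2 : (j : ℕ) < k
          · simp only [hhyb]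
            rw [if_pos (by omega : (j : ℕ) < k + 1), if_pos h2]
          · simp only [hhyb]
            rw [if_neg (by omega : ¬ (j : ℕ) < k + 1), if_neg h2]
      rw [ih (by omega), hupd]
      exact sign_step C NV (hyb k) (hybmem k) ⟨k, hk'⟩ (w' ⟨k, hk'⟩) (hw' ⟨k, hk'⟩)
  have hfin : hyb (d + 1) = w' := by
    funext j
    simp only [hhyb]
    rw [if_pos j.isLt]
  have hmm := main (d + 1) le_rfl
  rw [hfin] at hmm
  exact hmm

lemma exists_pos_lower (P : Finset E) (f : E → ℝ) (hf : ∀ x ∈ P, 0 < f x) :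
    ∃ δ : ℝ, 0 < δ ∧ ∀ x ∈ P, δ ≤ f x := by
  rcases P.eq_empty_or_nonempty with h | h
  · exact ⟨1, one_pos, by simp [h]⟩
  · refine ⟨P.inf' h f, ?_, fun x hx => Finset.inf'_le f hx⟩
    rw [Finset.lt_inf'_iff]
    exact hf

lemma exists_upper (P : Finset E) (f : E → ℝ) :
    ∃ C : ℝ, 0 < C ∧ ∀ x ∈ P, f x ≤ C := by
  rcases P.eq_empty_or_nonempty with h | h
  · exact ⟨1, one_pos, by simp [h]⟩
  · refine ⟨max 1 (P.sup' h f), lt_of_lt_of_le one_pos (le_max_left _ _), fun x hx => ?_⟩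
    exact le_trans (Finset.le_sup' f hx) (le_max_right _ _)

lemma coset_convex (x₀ : E) (V : Submodule ℝ E) : Convex ℝ {y : E | y - x₀ ∈ V} := by
  intro a ha b hb α β hα hβ hαβ
  have heq : α • a + β • b - x₀ = α • (a - x₀) + β • (b - x₀) := by
    have hx : α • x₀ + β • x₀ = x₀ := by rw [← add_smul, hαβ, one_smul]
    have h2 : α • a + β • b - (α • x₀ + β • x₀) = α • a - α • x₀ + (β • b - β • x₀) := by abel
    rw [hx] at h2
    rw [smul_sub, smul_sub]
    exact h2
  rw [Set.mem_setOf_eq, heq]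
  exact V.add_mem (V.smul_mem α ha) (V.smul_mem β hb)

set_option maxHeartbeats 2000000 in
theorem level_lemma (n : ℕ) : ∀ (V : Submodule ℝ E), finrank ℝ V ≤ n →
    ∀ (x₀ : E) (A : Fin (d + 1) → Finset E),
      (∀ i, ∀ x ∈ A i, x - x₀ ∈ V) →
    ∀ (s : Fin (d + 1) → Bool),
    ∃ W : Fin (d + 1) → Finset E,
      (∀ i, W i ⊆ A i) ∧
      (∀ i, (A i).card ≤ (2 * (d + 1)) ^ n * (W i).card) ∧
      ((∃ v : E, ∃ t : ℝ, ∀ i, ∀ x ∈ W i, if s i then ⟪v, x⟫ < t else t < ⟪v, x⟫)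
       ∨ (∃ T : Finset (Fin (d + 1)), (∀ i ∈ T, (W i).Nonempty) ∧
            finrank ℝ ↥(vectorSpan ℝ (⋃ i ∈ T, ((W i : Set E)))) + 2 ≤ T.card)) := by
  classical
  induction n with
  | zero =>
    intro V hV x₀ A hA s
    set act := univ.filter (fun i => (A i).Nonempty) with hact
    -- with rank 0, either all sets are in the same class, or we are degenerate
    by_cases hcase : ∃ i ∈ act, ∃ r ∈ act, s i ≠ s r
    · -- degenerate: at least two active sets confined to a point coset
      obtain ⟨i₀, hi₀, r₀, hr₀, hir⟩ := hcase
      refine ⟨A, fun i => Finset.Subset.refl _, fun i => by simp, Or.inr ⟨act, ?_, ?_⟩⟩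
      · intro i hi
        exact (Finset.mem_filter.mp hi).2
      · have hrank : finrank ℝ ↥(vectorSpan ℝ (⋃ i ∈ act, ((A i : Set E)))) ≤ finrank ℝ V := by
          apply Submodule.finrank_mono
          rw [vectorSpan]
          rw [Submodule.span_le]
          rintro z hz
          obtain ⟨x, hx, y, hy, rfl⟩ := hz
          obtain ⟨ix, hix, hxmem⟩ := Set.mem_iUnion₂.mp hx
          obtain ⟨iy, hiy, hymem⟩ := Set.mem_iUnion₂.mp hy
          have h1 := hA ix x (by exact_mod_cast hxmem)
          have h2 := hA iy y (by exact_mod_cast hymem)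
          have hv : x - y ∈ V := by
            have heq : x - y = (x - x₀) - (y - x₀) := by abel
            rw [heq]
            exact V.sub_mem h1 h2
          simpa [vsub_eq_sub] using hv
        have hcard2 : 2 ≤ act.card := by
          have : ({i₀, r₀} : Finset (Fin (d+1))) ⊆ act := by
            intro j hj
            rcases Finset.mem_insert.mp hj with h | h
            · rwa [h]
            · rw [Finset.mem_singleton.mp h]
              exact hr₀
          have hne : i₀ ≠ r₀ := fun h => hir (by rw [h])
          have := Finset.card_le_card this
          rwa [Finset.card_insert_of_notMem (by simp [hne]), Finset.card_singleton] at this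
        omega
    · -- all active same class : trivial separation
      push_neg at hcase
      refine ⟨A, fun i => Finset.Subset.refl _, fun i => by simp, Or.inl ?_⟩
      by_cases hall : ∀ i ∈ act, s i = true
      · refine ⟨0, 1, fun i x hx => ?_⟩
        have hiact : i ∈ act := Finset.mem_filter.mpr ⟨mem_univ i, ⟨x, hx⟩⟩
        rw [if_pos (hall i hiact)]
        simp
      · push_neg at hall
        obtain ⟨i₁, hi₁, hsi₁⟩ := hall
        have hsi₁' : s i₁ = false := by
          cases h : s i₁
          · rfl
          · exact absurd h hsi₁
        refine ⟨0, -1, fun i x hx => ?_⟩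
        have hiact : i ∈ act := Finset.mem_filter.mpr ⟨mem_univ i, ⟨x, hx⟩⟩
        have hsi : s i = false := by
          have hsr := hcase i hiact i₁ hi₁
          rw [hsi₁'] at hsr
          exact hsr
        rw [hsi]
        simp only [Bool.false_eq_true, if_false]
        simp
  | succ n' ih =>
    intro V hV x₀ A hA s
    set act := univ.filter (fun i => (A i).Nonempty) with hact
    set K := 2 * (d + 1) with hK
    have hK1 : 1 ≤ K := by omega
    have hKp : 1 ≤ K ^ (n' + 1) := Nat.one_le_pow _ _ (by omega)
    -- Case analysis
    by_cases hdeg : finrank ℝ V + 2 ≤ act.card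
    · -- degenerate bail-out
      refine ⟨A, fun i => Finset.Subset.refl _,
        fun i => Nat.le_mul_of_pos_left _ (by omega), Or.inr ⟨act, ?_, ?_⟩⟩
      · intro i hi
        exact (Finset.mem_filter.mp hi).2
      · have hrank : finrank ℝ ↥(vectorSpan ℝ (⋃ i ∈ act, ((A i : Set E)))) ≤ finrank ℝ V := by
          apply Submodule.finrank_mono
          rw [vectorSpan, Submodule.span_le]
          rintro z hz
          obtain ⟨x, hx, y, hy, rfl⟩ := hz
          obtain ⟨ix, hix, hxmem⟩ := Set.mem_iUnion₂.mp hx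
          obtain ⟨iy, hiy, hymem⟩ := Set.mem_iUnion₂.mp hy
          have h1 := hA ix x (by exact_mod_cast hxmem)
          have h2 := hA iy y (by exact_mod_cast hymem)
          have hv : x - y ∈ V := by
            have heq : x - y = (x - x₀) - (y - x₀) := by abel
            rw [heq]
            exact V.sub_mem h1 h2
          simpa [vsub_eq_sub] using hv
        omega
    by_cases hcase : ∃ i ∈ act, ∃ r ∈ act, s i ≠ s r
    swap
    · -- all active same class : trivial separation
      push_neg at hcase
      refine ⟨A, fun i => Finset.Subset.refl _,
        fun i => Nat.le_mul_of_pos_left _ (by omega), Or.inl ?_⟩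
      by_cases hall : ∀ i ∈ act, s i = true
      · refine ⟨0, 1, fun i x hx => ?_⟩
        have hiact : i ∈ act := Finset.mem_filter.mpr ⟨mem_univ i, ⟨x, hx⟩⟩
        rw [if_pos (hall i hiact)]
        simp
      · push_neg at hall
        obtain ⟨i₁, hi₁, hsi₁⟩ := hall
        have hsi₁' : s i₁ = false := by
          cases h : s i₁
          · rfl
          · exact absurd h hsi₁
        refine ⟨0, -1, fun i x hx => ?_⟩
        have hiact : i ∈ act := Finset.mem_filter.mpr ⟨mem_univ i, ⟨x, hx⟩⟩
        have hsi : s i = false := by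
          have hsr := hcase i hiact i₁ hi₁
          rw [hsi₁'] at hsr
          exact hsr
        rw [hsi]
        simp only [Bool.false_eq_true, if_false]
        simp
    -- MAIN CASE
    obtain ⟨i₀, hi₀, r₀, hr₀, hir⟩ := hcase
    have hir' : i₀ ≠ r₀ := fun h => hir (by rw [h])
    push_neg at hdeg
    have hactV : act.card ≤ finrank ℝ V + 1 := by omega
    have hcard2 : 2 ≤ act.card := by
      have hsub2 : ({i₀, r₀} : Finset (Fin (d+1))) ⊆ act := by
        intro j hj
        rcases Finset.mem_insert.mp hj with h | h
        · rwa [h]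
        · rw [Finset.mem_singleton.mp h]
          exact hr₀
      have := Finset.card_le_card hsub2
      rwa [Finset.card_insert_of_notMem (by simp [hir']), Finset.card_singleton] at this
    -- centerpoints
    have hqex : ∀ i, i ∈ act → ∃ q', q' ∈ convexHull ℝ ((A i : Set E)) ∧
        ∀ v : E, ∀ c : ℝ, ⟪v, q'⟫ ≤ c →
          (A i).card ≤ (d + 1) * ((A i).filter (fun x => ⟪v, x⟫ ≤ c)).card := by
      intro i hi
      obtain ⟨q', hq1, hq2⟩ := centerpoint (A i) (Finset.mem_filter.mp hi).2
      exact ⟨q', hq1, hq2⟩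
    choose! q hq1 hq2 using hqex
    -- the spanning directions
    set D := ((act.erase i₀).erase r₀).image (fun i => q i - q r₀) with hD
    set U := Submodule.span ℝ (D : Set E) with hU
    have hUr : finrank ℝ U ≤ act.card - 2 := by
      have hc := finrank_span_finset_le_card (R := ℝ) D
      rw [Set.finrank] at hc
      rw [← hU] at hc
      have hD1 : D.card ≤ ((act.erase i₀).erase r₀).card := Finset.card_image_le
      have hr₀e : r₀ ∈ act.erase i₀ := Finset.mem_erase.mpr ⟨fun h => hir' h.symm, hr₀⟩
      have h1 : ((act.erase i₀).erase r₀).card = act.card - 2 := by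
        rw [Finset.card_erase_of_mem hr₀e, Finset.card_erase_of_mem hi₀]
        omega
      omega
    -- find v₁
    have hrankinf : 1 ≤ finrank ℝ ↥(V ⊓ Uᗮ) := by
      have h1 := Submodule.finrank_sup_add_finrank_inf_eq V Uᗮ
      have h2 : finrank ℝ ↥(V ⊔ Uᗮ) ≤ d := by
        have := Submodule.finrank_le (V ⊔ Uᗮ)
        rwa [finrank_euclideanSpace_fin] at this
      have h3 : finrank ℝ U + finrank ℝ Uᗮ = d := by
        have := Submodule.finrank_add_finrank_orthogonal (K := U)
        rwa [finrank_euclideanSpace_fin] at this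
      omega
    have hVU : V ⊓ Uᗮ ≠ ⊥ := by
      intro h
      rw [h] at hrankinf
      simp at hrankinf
    obtain ⟨v₁, hv₁mem, hv₁ne⟩ := Submodule.exists_mem_ne_zero_of_ne_bot hVU
    have hv₁V : v₁ ∈ V := hv₁mem.1
    have hv₁U : v₁ ∈ Uᗮ := hv₁mem.2
    set t₁ := ⟪v₁, q r₀⟫ with ht₁
    have hqeq : ∀ i ∈ act.erase i₀, ⟪v₁, q i⟫ = t₁ := by
      intro i hi
      by_cases h : i = r₀
      · rw [h]
      · have hiD : q i - q r₀ ∈ U := by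
          apply Submodule.subset_span
          exact_mod_cast Finset.mem_image_of_mem _
            (Finset.mem_erase.mpr ⟨h, hi⟩)
        have h0 : ⟪q i - q r₀, v₁⟫ = 0 := (Submodule.mem_orthogonal U v₁).mp hv₁U _ hiD
        rw [real_inner_comm] at h0
        rw [inner_sub_right] at h0
        linarith
    -- orientation
    have horient : ∃ v₂ : E, ∃ t₂ : ℝ, v₂ ∈ V ∧ v₂ ≠ 0 ∧
        (∀ i ∈ act.erase i₀, ⟪v₂, q i⟫ = t₂) ∧
        (if s i₀ then ⟪v₂, q i₀⟫ ≤ t₂ else t₂ ≤ ⟪v₂, q i₀⟫) := by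
      by_cases hb : s i₀ = true
      · by_cases hc : ⟪v₁, q i₀⟫ ≤ t₁
        · exact ⟨v₁, t₁, hv₁V, hv₁ne, hqeq, by rw [if_pos hb]; exact hc⟩
        · refine ⟨-v₁, -t₁, neg_mem hv₁V, neg_ne_zero.mpr hv₁ne, ?_, ?_⟩
          · intro i hi
            rw [inner_neg_left, hqeq i hi]
          · rw [if_pos hb, inner_neg_left]
            push_neg at hc
            linarith
      · have hb' : s i₀ = false := by
          cases h : s i₀
          · rfl
          · exact absurd h hb
        by_cases hc : t₁ ≤ ⟪v₁, q i₀⟫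
        · exact ⟨v₁, t₁, hv₁V, hv₁ne, hqeq, by rw [hb']; simpa using hc⟩
        · refine ⟨-v₁, -t₁, neg_mem hv₁V, neg_ne_zero.mpr hv₁ne, ?_, ?_⟩
          · intro i hi
            rw [inner_neg_left, hqeq i hi]
          · rw [hb']
            simp only [Bool.false_eq_true, if_false, inner_neg_left]
            push_neg at hc
            linarith
    obtain ⟨v₂, t₂, hv₂V, hv₂ne, hv₂eq, hv₂or⟩ := horient
    -- the halves
    set vec : Fin (d + 1) → E := fun i => if s i then v₂ else -v₂ with hvec
    set cc : Fin (d + 1) → ℝ := fun i => if s i then t₂ else -t₂ with hcc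
    set B : Fin (d + 1) → Finset E := fun i => (A i).filter (fun x => ⟪vec i, x⟫ ≤ cc i) with hB
    have hBsub : ∀ i, B i ⊆ A i := fun i => Finset.filter_subset _ _
    have hBcard : ∀ i ∈ act, (A i).card ≤ (d + 1) * (B i).card := by
      intro i hi
      apply hq2 i hi
      by_cases h : i = i₀
      · subst h
        by_cases hb : s i = true
        · rw [hb] at hv₂or
          simp only [if_true] at hv₂or
          simp only [hvec, hcc, hb, if_true]
          exact hv₂or
        · have hb' : s i = false := by
            cases hbb : s i
            · rfl
            · exact absurd hbb hb
          rw [hb'] at hv₂or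
          simp only [Bool.false_eq_true, if_false] at hv₂or
          simp only [hvec, hcc, hb', Bool.false_eq_true, if_false, inner_neg_left]
          linarith
      · have heq := hv₂eq i (Finset.mem_erase.mpr ⟨h, hi⟩)
        by_cases hb : s i = true
        · simp only [hvec, hcc, hb, if_true]
          exact le_of_eq heq
        · have hb' : s i = false := by
            cases hbb : s i
            · rfl
            · exact absurd hbb hb
          simp only [hvec, hcc, hb', Bool.false_eq_true, if_false, inner_neg_left]
          linarith [le_of_eq heq]
    -- split into the hyperplane part and strict part
    set onp : Fin (d + 1) → Finset E := fun i => (B i).filter (fun x => ⟪vec i, x⟫ = cc i)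
      with honp
    set st : Fin (d + 1) → Finset E := fun i => (B i).filter (fun x => ¬ ⟪vec i, x⟫ = cc i)
      with hst
    have hsplitcard : ∀ i, (B i).card = (onp i).card + (st i).card := by
      intro i
      exact (Finset.card_filter_add_card_filter_not
        (s := B i) (p := fun x => ⟪vec i, x⟫ = cc i)).symm
    have honmem : ∀ i, ∀ x ∈ onp i, ⟪v₂, x⟫ = t₂ := by
      intro i x hx
      have hx' := (Finset.mem_filter.mp hx).2
      by_cases hb : s i = true
      · simpa [hvec, hcc, hb] using hx'
      · have hb' : s i = false := by
          cases hbb : s i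
          · rfl
          · exact absurd hbb hb
        simp only [hvec, hcc, hb', Bool.false_eq_true, if_false, inner_neg_left] at hx'
        linarith
    have hstmem : ∀ i, ∀ x ∈ st i,
        (if s i then ⟪v₂, x⟫ < t₂ else t₂ < ⟪v₂, x⟫) := by
      intro i x hx
      have hx1 := (Finset.mem_filter.mp (Finset.filter_subset _ _ hx)).2
      have hx2 := (Finset.mem_filter.mp hx).2
      by_cases hb : s i = true
      · rw [if_pos hb]
        simp only [hvec, hcc, hb, if_true] at hx1 hx2
        exact lt_of_le_of_ne hx1 hx2
      · have hb' : s i = false := by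
          cases hbb : s i
          · rfl
          · exact absurd hbb hb
        rw [hb']
        simp only [Bool.false_eq_true, if_false]
        simp only [hvec, hcc, hb', Bool.false_eq_true, if_false, inner_neg_left] at hx1 hx2
        have : ⟪v₂, x⟫ ≠ t₂ := by
          intro h
          apply hx2
          rw [h]
        cases lt_or_eq_of_le (by linarith : t₂ ≤ ⟪v₂, x⟫) with
        | inl h => exact h
        | inr h => exact absurd h.symm this
    -- heavy sets pass to the recursion
    set A' : Fin (d + 1) → Finset E :=
      fun i => if i ∈ act ∧ (st i).card ≤ (onp i).card then onp i else ∅ with hA'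
    have hA'def : ∀ j, A' j = if j ∈ act ∧ (st j).card ≤ (onp j).card then onp j else ∅ :=
      fun j => rfl
    have hqr₀act : r₀ ∈ act.erase i₀ := Finset.mem_erase.mpr ⟨fun h => hir' h.symm, hr₀⟩
    have hqr₀V : q r₀ - x₀ ∈ V := by
      have hhull : convexHull ℝ ((A r₀ : Set E)) ⊆ {y : E | y - x₀ ∈ V} := by
        apply convexHull_min
        · intro x hx
          exact hA r₀ x (by exact_mod_cast hx)
        · exact coset_convex x₀ V
      exact hhull (hq1 r₀ hr₀)
    have hqr₀t : ⟪v₂, q r₀⟫ = t₂ := hv₂eq r₀ hqr₀act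
    set V' := V ⊓ (Submodule.span ℝ {v₂})ᗮ with hV'
    have hV'rank : finrank ℝ V' ≤ n' := by
      have hlt : V' < V := by
        rw [lt_iff_le_and_ne]
        refine ⟨inf_le_left, ?_⟩
        intro h
        have hv₂V' : v₂ ∈ V' := by
          rw [h]
          exact hv₂V
        have hmem2 : v₂ ∈ (Submodule.span ℝ ({v₂} : Set E))ᗮ :=
          (Submodule.mem_inf.mp hv₂V').2
        have h0 := (Submodule.mem_orthogonal _ v₂).mp hmem2 v₂
          (Submodule.mem_span_singleton_self v₂)
        rw [inner_self_eq_zero] at h0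
        exact hv₂ne h0
      have := Submodule.finrank_lt_finrank_of_lt hlt
      omega
    have hA'conf : ∀ i, ∀ x ∈ A' i, x - q r₀ ∈ V' := by
      intro i x hx
      rw [hA'def i] at hx
      by_cases hcnd : i ∈ act ∧ (st i).card ≤ (onp i).card
      · rw [if_pos hcnd] at hx
        have hxA : x ∈ A i := (hBsub i) (Finset.filter_subset _ _ hx)
        have hxon := honmem i x hx
        rw [hV', Submodule.mem_inf]
        constructor
        · have h1 := hA i x hxA
          have heq : x - q r₀ = (x - x₀) - (q r₀ - x₀) := by abel
          rw [heq]
          exact V.sub_mem h1 hqr₀V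
        · rw [Submodule.mem_orthogonal]
          intro u hu
          obtain ⟨c, rfl⟩ := Submodule.mem_span_singleton.mp hu
          rw [real_inner_smul_left, inner_sub_right, hxon, hqr₀t]
          ring
      · rw [if_neg hcnd] at hx
        simp at hx
    -- recursive call
    obtain ⟨W', hW'sub, hW'card, houtcome⟩ := ih V' hV'rank (q r₀) A' hA'conf s
    have hA'on : ∀ i, A' i ≠ ∅ → (i ∈ act ∧ (st i).card ≤ (onp i).card) := by
      intro i hi
      by_contra h
      rw [hA'def i, if_neg h] at hi
      exact hi rfl
    rcases houtcome with ⟨v', t', hsep'⟩ | ⟨T', hT'ne, hT'rank⟩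
    · -- separation outcome : combine functionals
      set W : Fin (d + 1) → Finset E := fun i =>
        if i ∈ act then (if (st i).card ≤ (onp i).card then W' i else st i) else ∅ with hW
      have hWdef : ∀ j, W j =
          if j ∈ act then (if (st j).card ≤ (onp j).card then W' j else st j) else ∅ :=
        fun j => rfl
      have hWsub : ∀ i, W i ⊆ A i := by
        intro i
        rw [hWdef i]
        by_cases h1 : i ∈ act
        · rw [if_pos h1]
          by_cases h2 : (st i).card ≤ (onp i).card
          · rw [if_pos h2]
            intro x hx
            have := hW'sub i hx
            rw [hA'def i, if_pos ⟨h1, h2⟩] at this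
            exact (hBsub i) (Finset.filter_subset _ _ this)
          · rw [if_neg h2]
            exact (Finset.filter_subset _ _).trans (hBsub i)
        · rw [if_neg h1]
          intro x hx
          simp at hx
      have hWcard : ∀ i, (A i).card ≤ K ^ (n' + 1) * (W i).card := by
        intro i
        rw [hWdef i]
        by_cases h1 : i ∈ act
        · rw [if_pos h1]
          by_cases h2 : (st i).card ≤ (onp i).card
          · rw [if_pos h2]
            have hc1 := hBcard i h1
            have hc2 := hsplitcard i
            have hc3 := hW'card i
            rw [hA'def i, if_pos ⟨h1, h2⟩] at hc3
            calc (A i).card ≤ (d + 1) * (B i).card := hc1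
              _ ≤ (d + 1) * (2 * (onp i).card) := Nat.mul_le_mul_left _ (by omega)
              _ = K * (onp i).card := by rw [hK]; ring
              _ ≤ K * (K ^ n' * (W' i).card) := Nat.mul_le_mul_left _ hc3
              _ = K ^ (n' + 1) * (W' i).card := by rw [pow_succ]; ring
          · rw [if_neg h2]
            have hc1 := hBcard i h1
            have hc2 := hsplitcard i
            calc (A i).card ≤ (d + 1) * (B i).card := hc1
              _ ≤ (d + 1) * (2 * (st i).card) := Nat.mul_le_mul_left _ (by omega)
              _ = K * (st i).card := by rw [hK]; ring
              _ ≤ K ^ (n' + 1) * (st i).card := by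
                  apply Nat.mul_le_mul_right
                  calc K = K ^ 1 := (pow_one K).symm
                    _ ≤ K ^ (n' + 1) := Nat.pow_le_pow_right (by omega) (by omega)
        · rw [if_neg h1]
          have : ¬ (A i).Nonempty := by
            intro h
            exact h1 (Finset.mem_filter.mpr ⟨mem_univ i, h⟩)
          rw [Finset.not_nonempty_iff_eq_empty] at this
          rw [this]
          simp
      refine ⟨W, hWsub, hWcard, Or.inl ?_⟩
      -- margins
      set Pts : Finset E := univ.biUnion (fun i => if i ∈ act ∧ ¬ (st i).card ≤ (onp i).card
        then st i else ∅) with hPts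
      obtain ⟨δ, hδpos, hδ⟩ := exists_pos_lower Pts (fun x => |⟪v₂, x⟫ - t₂|) (by
        intro x hx
        simp only [hPts, Finset.mem_biUnion] at hx
        obtain ⟨i, _, hxi⟩ := hx
        by_cases hcnd : i ∈ act ∧ ¬ (st i).card ≤ (onp i).card
        · rw [if_pos hcnd] at hxi
          have := hstmem i x hxi
          rw [abs_pos, sub_ne_zero]
          by_cases hb : s i = true
          · rw [if_pos hb] at this
            exact ne_of_lt this
          · have hb' : s i = false := by
              cases hbb : s i
              · rfl
              · exact absurd hbb hb
            rw [hb'] at this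
            simp only [Bool.false_eq_true, if_false] at this
            exact ne_of_gt this
        · rw [if_neg hcnd] at hxi
          simp at hxi)
      set Qts : Finset E := univ.biUnion B with hQts
      obtain ⟨Cb, hCpos, hCb⟩ := exists_upper Qts (fun x => |⟪v', x⟫ - t'|)
      set ε := δ / (2 * Cb) with hε
      have hεpos : 0 < ε := div_pos hδpos (by linarith)
      have hεC : ε * Cb < δ := by
        rw [hε]
        rw [div_mul_eq_mul_div]
        rw [div_lt_iff₀ (by linarith)]
        nlinarith
      refine ⟨v₂ + ε • v', t₂ + ε * t', ?_⟩
      intro i x hx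
      rw [hWdef i] at hx
      by_cases h1 : i ∈ act
      swap
      · rw [if_neg h1] at hx
        simp at hx
      rw [if_pos h1] at hx
      have hinner : ⟪v₂ + ε • v', x⟫ = ⟪v₂, x⟫ + ε * ⟪v', x⟫ := by
        rw [inner_add_left, real_inner_smul_left]
      by_cases h2 : (st i).card ≤ (onp i).card
      · -- heavy : on the hyperplane, inner functional decides
        rw [if_pos h2] at hx
        have hxA' : x ∈ A' i := hW'sub i hx
        have hxon : x ∈ onp i := by
          rw [hA'def i, if_pos ⟨h1, h2⟩] at hxA'
          exact hxA'
        have hxt₂ : ⟪v₂, x⟫ = t₂ := honmem i x hxon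
        have hsepx := hsep' i x hx
        by_cases hb : s i = true
        · rw [if_pos hb]
          rw [if_pos hb] at hsepx
          rw [hinner, hxt₂]
          have : ε * ⟪v', x⟫ < ε * t' := by
            apply mul_lt_mul_of_pos_left hsepx hεpos
          linarith
        · have hb' : s i = false := by
            cases hbb : s i
            · rfl
            · exact absurd hbb hb
          rw [hb']
          simp only [Bool.false_eq_true, if_false]
          rw [hb'] at hsepx
          simp only [Bool.false_eq_true, if_false] at hsepx
          rw [hinner, hxt₂]
          have : ε * t' < ε * ⟪v', x⟫ := by
            apply mul_lt_mul_of_pos_left hsepx hεpos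
          linarith
      · -- resolved : the outer functional dominates
        rw [if_neg h2] at hx
        have hxPts : x ∈ Pts := by
          simp only [hPts, Finset.mem_biUnion]
          exact ⟨i, mem_univ i, by rw [if_pos ⟨h1, h2⟩]; exact hx⟩
        have hxQts : x ∈ Qts := by
          simp only [hQts, Finset.mem_biUnion]
          exact ⟨i, mem_univ i, Finset.filter_subset _ _ hx⟩
        have hδx := hδ x hxPts
        have hCx := hCb x hxQts
        have hstx := hstmem i x hx
        have hbound : |ε * ⟪v', x⟫ - ε * t'| < δ := by
          rw [← mul_sub]
          rw [abs_mul, abs_of_pos hεpos]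
          calc ε * |⟪v', x⟫ - t'| ≤ ε * Cb := by
                apply mul_le_mul_of_nonneg_left hCx (le_of_lt hεpos)
            _ < δ := hεC
        have habs := abs_lt.mp hbound
        by_cases hb : s i = true
        · rw [if_pos hb]
          rw [if_pos hb] at hstx
          have : δ ≤ t₂ - ⟪v₂, x⟫ := by
            rw [abs_of_neg (by linarith : ⟪v₂, x⟫ - t₂ < 0)] at hδx
            linarith
          rw [hinner]
          linarith [habs.2]
        · have hb' : s i = false := by
            cases hbb : s i
            · rfl
            · exact absurd hbb hb
          rw [hb']
          simp only [Bool.false_eq_true, if_false]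
          rw [hb'] at hstx
          simp only [Bool.false_eq_true, if_false] at hstx
          have : δ ≤ ⟪v₂, x⟫ - t₂ := by
            rw [abs_of_pos (by linarith : 0 < ⟪v₂, x⟫ - t₂)] at hδx
            linarith
          rw [hinner]
          linarith [habs.1]
    · -- degenerate outcome propagates
      set W : Fin (d + 1) → Finset E := fun i => if i ∈ T' then W' i else A i with hW
      have hWdef : ∀ j, W j = if j ∈ T' then W' j else A j := fun j => rfl
      have hWsub : ∀ i, W i ⊆ A i := by
        intro i
        rw [hWdef i]
        by_cases h1 : i ∈ T'
        · rw [if_pos h1]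
          intro x hx
          have hxA' := hW'sub i hx
          rcases Finset.eq_empty_or_nonempty (A' i) with he | hne
          · rw [he] at hxA'
            simp at hxA'
          · have hcnd := hA'on i (Finset.nonempty_iff_ne_empty.mp hne)
            rw [hA'def i, if_pos hcnd] at hxA'
            exact (hBsub i) (Finset.filter_subset _ _ hxA')
        · rw [if_neg h1]
      have hWcard : ∀ i, (A i).card ≤ K ^ (n' + 1) * (W i).card := by
        intro i
        rw [hWdef i]
        by_cases h1 : i ∈ T'
        · rw [if_pos h1]
          have hW'ne : (W' i).Nonempty := hT'ne i h1
          have hA'ne : (A' i).Nonempty := by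
            obtain ⟨x, hx⟩ := hW'ne
            exact ⟨x, hW'sub i hx⟩
          have hcnd := hA'on i (Finset.nonempty_iff_ne_empty.mp hA'ne)
          obtain ⟨hiact, hheavy⟩ := hcnd
          have hc1 := hBcard i hiact
          have hc2 := hsplitcard i
          have hc3 := hW'card i
          rw [hA'def i, if_pos ⟨hiact, hheavy⟩] at hc3
          calc (A i).card ≤ (d + 1) * (B i).card := hc1
            _ ≤ (d + 1) * (2 * (onp i).card) := Nat.mul_le_mul_left _ (by omega)
            _ = K * (onp i).card := by rw [hK]; ring
            _ ≤ K * (K ^ n' * (W' i).card) := Nat.mul_le_mul_left _ hc3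
            _ = K ^ (n' + 1) * (W' i).card := by rw [pow_succ]; ring
        · rw [if_neg h1]
          exact Nat.le_mul_of_pos_left _ (by omega)
      refine ⟨W, hWsub, hWcard, Or.inr ⟨T', ?_, ?_⟩⟩
      · intro i hi
        rw [hWdef i, if_pos hi]
        exact hT'ne i hi
      · have hset : (⋃ i ∈ T', ((W i : Set E))) = (⋃ i ∈ T', ((W' i : Set E))) := by
          apply Set.iUnion₂_congr
          intro i hi
          rw [hWdef i, if_pos hi]
        rw [hset]
        exact hT'rank

variable {m : ℕ}

/-- The per-task goal: either strict separation for the sign pattern, or a degeneracy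
certificate. -/
def Ptask (g : Fin (d + 1) → Fin m) (s : Fin (d + 1) → Bool) (Y : Fin m → Finset E) : Prop :=
  (∃ v : E, ∃ t : ℝ, ∀ j, ∀ x ∈ Y (g j), if s j then ⟪v, x⟫ < t else t < ⟪v, x⟫)
  ∨ (∃ T : Finset (Fin (d + 1)),
      finrank ℝ ↥(vectorSpan ℝ (⋃ j ∈ T, ((Y (g j) : Set E)))) + 2 ≤ T.card)

lemma Ptask_mono {g : Fin (d + 1) → Fin m} {s : Fin (d + 1) → Bool}
    {Y Z : Fin m → Finset E} (hZY : ∀ i, Z i ⊆ Y i) (h : Ptask g s Y) : Ptask g s Z := by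
  rcases h with ⟨v, t, hvt⟩ | ⟨T, hT⟩
  · exact Or.inl ⟨v, t, fun j x hx => hvt j x (hZY (g j) hx)⟩
  · refine Or.inr ⟨T, ?_⟩
    have hsub : (⋃ j ∈ T, ((Z (g j) : Set E))) ⊆ (⋃ j ∈ T, ((Y (g j) : Set E))) := by
      apply Set.iUnion₂_mono
      intro j _
      exact_mod_cast hZY (g j)
    have := Submodule.finrank_mono (vectorSpan_mono ℝ hsub)
    omega

lemma refine_one (g : Fin (d + 1) → Fin m) (s : Fin (d + 1) → Bool) (Y : Fin m → Finset E) :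
    ∃ Z : Fin m → Finset E, (∀ i, Z i ⊆ Y i) ∧
      (∀ i, (Y i).card ≤ (2 * (d + 1)) ^ d * (Z i).card) ∧
      (Function.Injective g → Ptask g s Z) := by
  classical
  have hKpos : 0 < (2 * (d + 1)) ^ d := Nat.pow_pos (by omega)
  by_cases hg : Function.Injective g
  · obtain ⟨W, hWsub, hWcard, hout⟩ := level_lemma d ⊤
      (by rw [finrank_top, finrank_euclideanSpace_fin]) 0 (fun j => Y (g j))
      (fun i x _ => Submodule.mem_top) s
    set Z : Fin m → Finset E :=
      fun i => if h : ∃ j, g j = i then W h.choose else Y i with hZ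
    have hZdef : ∀ i, Z i = if h : ∃ j, g j = i then W h.choose else Y i := fun i => rfl
    have hZg : ∀ j, Z (g j) = W j := by
      intro j
      have hex : ∃ j', g j' = g j := ⟨j, rfl⟩
      rw [hZdef (g j), dif_pos hex]
      congr 1
      exact hg hex.choose_spec
    have hZsub : ∀ i, Z i ⊆ Y i := by
      intro i
      rw [hZdef i]
      by_cases h : ∃ j, g j = i
      · rw [dif_pos h]
        have := hWsub h.choose
        rwa [h.choose_spec] at this
      · rw [dif_neg h]
    refine ⟨Z, hZsub, ?_, ?_⟩
    · intro i
      rw [hZdef i]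
      by_cases h : ∃ j, g j = i
      · rw [dif_pos h]
        have := hWcard h.choose
        rwa [h.choose_spec] at this
      · rw [dif_neg h]
        exact Nat.le_mul_of_pos_left _ hKpos
    · intro _
      rcases hout with ⟨v, t, hvt⟩ | ⟨T, _, hT⟩
      · refine Or.inl ⟨v, t, fun j x hx => ?_⟩
        rw [hZg j] at hx
        exact hvt j x hx
      · refine Or.inr ⟨T, ?_⟩
        have hset : (⋃ j ∈ T, ((Z (g j) : Set E))) = (⋃ j ∈ T, ((W j : Set E))) := by
          apply Set.iUnion₂_congr
          intro j _
          rw [hZg j]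
        rw [hset]
        exact hT
  · exact ⟨Y, fun i => Finset.Subset.refl _,
      fun i => Nat.le_mul_of_pos_left _ hKpos, fun h => absurd h hg⟩

lemma task_loop (L : List ((Fin (d + 1) → Fin m) × (Fin (d + 1) → Bool)))
    (Y : Fin m → Finset E) :
    ∃ Z : Fin m → Finset E, (∀ i, Z i ⊆ Y i) ∧
      (∀ i, (Y i).card ≤ ((2 * (d + 1)) ^ d) ^ L.length * (Z i).card) ∧
      ∀ p ∈ L, Function.Injective p.1 → Ptask p.1 p.2 Z := by
  classical
  induction L generalizing Y with
  | nil =>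
    refine ⟨Y, fun i => Finset.Subset.refl _, fun i => by simp, by simp⟩
  | cons hd tl ih =>
    obtain ⟨Z₁, h1, h2, h3⟩ := refine_one hd.1 hd.2 Y
    obtain ⟨Z, g1, g2, g3⟩ := ih Z₁
    refine ⟨Z, fun i => (g1 i).trans (h1 i), ?_, ?_⟩
    · intro i
      calc (Y i).card ≤ (2 * (d + 1)) ^ d * (Z₁ i).card := h2 i
        _ ≤ (2 * (d + 1)) ^ d * (((2 * (d + 1)) ^ d) ^ tl.length * (Z i).card) :=
            Nat.mul_le_mul_left _ (g2 i)
        _ = ((2 * (d + 1)) ^ d) ^ (tl.length + 1) * (Z i).card := by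
            rw [pow_succ]
            ring
        _ = ((2 * (d + 1)) ^ d) ^ (hd :: tl).length * (Z i).card := by
            rw [List.length_cons]
    · intro p hp hinj
      rcases List.mem_cons.mp hp with h | h
      · subst h
        exact Ptask_mono g1 (h3 hinj)
      · exact g3 p h hinj

end SameTypeProof


open Module in
/-- **Same-type lemma** (Bárány–Valtr). -/
theorem same_type_lemma (d m : ℕ) (hd : 1 ≤ d) (hm : 1 ≤ m) :
    ∃ c' : ℝ, 0 < c' ∧
      ∀ X : Fin m → Finset (EuclideanSpace ℝ (Fin d)),
        ∃ Y : Fin m → Finset (EuclideanSpace ℝ (Fin d)),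
          (∀ i, Y i ⊆ X i) ∧
          (∀ i, c' * ((X i).card : ℝ) ≤ ((Y i).card : ℝ)) ∧
          (∀ z z' : Fin m → EuclideanSpace ℝ (Fin d),
            (∀ i, z i ∈ Y i) → (∀ i, z' i ∈ Y i) → SameOrderType z z') := by
  classical
  set L := (Finset.univ : Finset ((Fin (d + 1) → Fin m) × (Fin (d + 1) → Bool))).toList with hL
  set K : ℕ := ((2 * (d + 1)) ^ d) ^ L.length with hKdef
  have hKpos : 0 < K := Nat.pow_pos (Nat.pow_pos (by omega))
  have hKposR : (0 : ℝ) < (K : ℝ) := by exact_mod_cast hKpos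
  refine ⟨1 / (K : ℝ), by positivity, ?_⟩
  intro X
  obtain ⟨Y, hsub, hcard, hP⟩ := SameTypeProof.task_loop L X
  refine ⟨Y, hsub, ?_, ?_⟩
  · intro i
    have h := hcard i
    have h' : ((X i).card : ℝ) ≤ (K : ℝ) * ((Y i).card : ℝ) := by exact_mod_cast h
    rw [div_mul_eq_mul_div, one_mul, div_le_iff₀ hKposR, mul_comm]
    exact h'
  · intro z z' hz hz' g hg
    have hPg : ∀ s, SameTypeProof.Ptask g s Y :=
      fun s => hP (g, s) (by rw [Finset.mem_toList]; exact Finset.mem_univ _) hg.injective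
    by_cases hdeg : ∃ T : Finset (Fin (d + 1)),
        finrank ℝ ↥(vectorSpan ℝ (⋃ j ∈ T, ((Y (g j) : Set (EuclideanSpace ℝ (Fin d)))))) + 2
          ≤ T.card
    · obtain ⟨T, hT⟩ := hdeg
      have hmemz : ∀ j ∈ T, z (g j) ∈
          affineSpan ℝ (⋃ j ∈ T, ((Y (g j) : Set (EuclideanSpace ℝ (Fin d))))) := by
        intro j hj
        exact subset_affineSpan ℝ _ (Set.mem_biUnion hj (hz (g j)))
      have hmemz' : ∀ j ∈ T, z' (g j) ∈
          affineSpan ℝ (⋃ j ∈ T, ((Y (g j) : Set (EuclideanSpace ℝ (Fin d))))) := by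
        intro j hj
        exact subset_affineSpan ℝ _ (Set.mem_biUnion hj (hz' (g j)))
      have hz0 : orientationDet z g = 0 :=
        SameTypeProof.det_eq_zero_of_confined (fun j => z (g j)) T _ hT hmemz
      have hz'0 : orientationDet z' g = 0 :=
        SameTypeProof.det_eq_zero_of_confined (fun j => z' (g j)) T _ hT hmemz'
      rw [hz0, hz'0]
    · push_neg at hdeg
      have hsep : ∀ s : Fin (d + 1) → Bool, ∃ v : EuclideanSpace ℝ (Fin d), ∃ t : ℝ,
          ∀ j, ∀ x ∈ Y (g j), if s j then ⟪v, x⟫ < t else t < ⟪v, x⟫ := by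
        intro s
        rcases hPg s with h | ⟨T, hT⟩
        · exact h
        · have := hdeg T
          omega
      have NV : ∀ w : Fin (d + 1) → EuclideanSpace ℝ (Fin d),
          (∀ j, w j ∈ convexHull ℝ ((Y (g j) : Set (EuclideanSpace ℝ (Fin d))))) →
          (SameTypeProof.colMat w).det ≠ 0 :=
        fun w hw => SameTypeProof.det_ne_zero_of_sep (fun j => Y (g j)) hsep w hw
      exact SameTypeProof.sign_const (fun j => Y (g j)) NV
        (fun j => z (g j)) (fun j => z' (g j))
        (fun j => subset_convexHull ℝ _ (hz (g j)))
        (fun j => subset_convexHull ℝ _ (hz' (g j)))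
end

section
/- For every α > 0 and every dimension d ≥ 1 there exists a constant β = β(α, d) > 0 such that the following holds for every n ≥ d+1. Let C_1, …, C_n be convex sets in ℝ^d. Suppose that at least α·C(n, d+1) of the (d+1)-element subsets {i_1, …, i_{d+1}} ⊆ {1, …, n} satisfy C_{i_1} ∩ ⋯ ∩ C_{i_{d+1}} ≠ ∅. Then there exists an index set J ⊆ {1, …, n} with |J| ≥ βn such that ⋂_{j ∈ J} C_j ≠ ∅. -/
open scoped Classical
open Finset
lemma minnorm_unique {V : Type*} [NormedAddCommGroup V] [NormedSpace ℝ V]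
    [StrictConvexSpace ℝ V] {K : Set V} (hK : Convex ℝ K)
    {x y : V} (hx : x ∈ K) (hy : y ∈ K)
    (hxm : IsMinOn norm K x) (hym : IsMinOn norm K y) : x = y := by
  by_contra hne
  have h1 : ‖x‖ = ‖y‖ := le_antisymm (isMinOn_iff.mp hxm y hy) (isMinOn_iff.mp hym x hx)
  have hmid : (1/2 : ℝ) • (x + y) ∈ K := by
    have := hK hx hy (by norm_num : (0:ℝ) ≤ 1/2) (by norm_num : (0:ℝ) ≤ 1/2) (by norm_num)
    simpa [smul_add] using this
  have hlt : ‖(1/2 : ℝ) • (x + y)‖ < ‖x‖ := (norm_midpoint_lt_iff h1).2 hne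
  exact absurd (isMinOn_iff.mp hxm _ hmid) (not_le.mpr hlt)

/-- Key lemma: the min-norm point of the intersection of `d+1` convex sets in `ℝ^d`
is also a min-norm point of the intersection of some `d` of them. -/
lemma key_lemma {d n : ℕ} {D : Fin n → Set (EuclideanSpace ℝ (Fin d))}
    (hDc : ∀ i, Convex ℝ (D i)) {T : Finset (Fin n)} (hT : T.card = d + 1)
    {x : EuclideanSpace ℝ (Fin d)} (hx : x ∈ ⋂ i ∈ T, D i)
    (hxm : IsMinOn norm (⋂ i ∈ T, D i) x) :
    ∃ S ⊆ T, S.card = d ∧ IsMinOn norm (⋂ i ∈ S, D i) x := by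
  have hfr : Module.finrank ℝ (EuclideanSpace ℝ (Fin d)) = d := finrank_euclideanSpace_fin
  by_contra hcon
  push_neg at hcon
  have hball : ∀ i ∈ T, ((⋂ j ∈ T.erase i, D j) ∩ Metric.ball 0 ‖x‖).Nonempty := by
    intro i hi
    have hcard : (T.erase i).card = d := by rw [card_erase_of_mem hi, hT]; omega
    have hnot := hcon (T.erase i) (erase_subset _ _) hcard
    rw [isMinOn_iff] at hnot
    push_neg at hnot
    obtain ⟨y, hy, hylt⟩ := hnot
    exact ⟨y, hy, by simpa [Metric.mem_ball, dist_zero_right] using hylt⟩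
  set L : Set (EuclideanSpace ℝ (Fin d)) := Metric.ball 0 ‖x‖ with hL
  let F : Option (Fin n) → Set (EuclideanSpace ℝ (Fin d)) := fun o => o.elim L D
  have hhelly : (⋂ o ∈ insert none (T.image some), F o).Nonempty := by
    apply Convex.helly_theorem' (𝕜 := ℝ)
    · rintro (_ | i) _
      · exact convex_ball 0 _
      · exact hDc i
    · intro I hI hIcard
      rw [hfr] at hIcard
      by_cases hnone : none ∈ I
      · obtain ⟨i, hiT, hinot⟩ : ∃ i ∈ T, some i ∉ I := by
          by_contra hno; push_neg at hno
          have hsub : T.image some ⊆ I.erase none := by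
            intro o ho
            obtain ⟨i, hiT, rfl⟩ := mem_image.mp ho
            exact mem_erase.mpr ⟨by simp, hno i hiT⟩
          have hc := card_le_card hsub
          rw [card_image_of_injective _ (Option.some_injective _), hT] at hc
          have := card_erase_of_mem hnone
          omega
        obtain ⟨y, hy, hyL⟩ := hball i hiT
        refine ⟨y, Set.mem_iInter₂.mpr ?_⟩
        intro o ho
        cases o with
        | none => exact hyL
        | some j =>
          have hj : some j ∈ insert none (T.image some) := hI ho
          rcases mem_insert.mp hj with h | h
          · exact absurd h (by simp)
          · obtain ⟨j', hj'T, hj'⟩ := mem_image.mp h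
            have hjT : j ∈ T := by rwa [Option.some_injective _ hj'] at hj'T
            have hji : j ≠ i := fun h => hinot (h ▸ ho)
            exact Set.mem_iInter₂.mp hy j (mem_erase.mpr ⟨hji, hjT⟩)
          
      · refine ⟨x, Set.mem_iInter₂.mpr ?_⟩
        intro o ho
        cases o with
        | none => exact absurd ho hnone
        | some j =>
          have hj : some j ∈ insert none (T.image some) := hI ho
          rcases mem_insert.mp hj with h | h
          · exact absurd h (by simp)
          · obtain ⟨j', hj'T, hj'⟩ := mem_image.mp h
            have hjT : j ∈ T := by rwa [Option.some_injective _ hj'] at hj'T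
            exact Set.mem_iInter₂.mp hx j hjT
  obtain ⟨y, hy⟩ := hhelly
  have hyL : y ∈ L := Set.mem_iInter₂.mp hy none (mem_insert_self _ _)
  have hyT : y ∈ ⋂ j ∈ T, D j := Set.mem_iInter₂.mpr fun j hj =>
    Set.mem_iInter₂.mp hy (some j) (mem_insert_of_mem (mem_image_of_mem _ hj))
  have h1 := isMinOn_iff.mp hxm y hyT
  have h2 : ‖y‖ < ‖x‖ := by simpa [hL, Metric.mem_ball, dist_zero_right] using hyL
  exact absurd h1 (not_le.mpr h2)

/-- **Fractional Helly theorem** (Katchalski–Liu). -/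
theorem fractional_helly (α : ℝ) (hα : 0 < α) (d : ℕ) (hd : 1 ≤ d) :
    ∃ β : ℝ, 0 < β ∧
      ∀ n : ℕ, d + 1 ≤ n →
      ∀ C : Fin n → Set (EuclideanSpace ℝ (Fin d)), (∀ i, Convex ℝ (C i)) →
        α * (n.choose (d + 1) : ℝ) ≤
          ((((Finset.univ : Finset (Fin n)).powersetCard (d + 1)).filter fun T =>
              (⋂ i ∈ T, C i).Nonempty).card : ℝ) →
        ∃ J : Finset (Fin n), β * (n : ℝ) ≤ (J.card : ℝ) ∧ (⋂ j ∈ J, C j).Nonempty := by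
  refine ⟨α / ((d + 1 : ℝ)) ^ 2, by positivity, ?_⟩
  intro n hn C hC hcount
  set G := ((Finset.univ : Finset (Fin n)).powersetCard (d + 1)).filter fun T =>
      (⋂ i ∈ T, C i).Nonempty with hGdef
  have hchoosepos : 0 < (n.choose (d + 1) : ℝ) := by
    exact_mod_cast Nat.choose_pos hn
  have hGpos : (0 : ℝ) < G.card := lt_of_lt_of_le (mul_pos hα hchoosepos) hcount
  have hGcardpos : 0 < G.card := by exact_mod_cast hGpos
  -- witness points
  let p : Finset (Fin n) → EuclideanSpace ℝ (Fin d) := fun T =>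
    if h : (⋂ i ∈ T, C i).Nonempty then h.some else 0
  have hpmem : ∀ T ∈ G, p T ∈ ⋂ i ∈ T, C i := by
    intro T hT
    have h := (mem_filter.mp hT).2
    simp only [p, dif_pos h]
    exact h.some_mem
  -- compact convex subsets
  let D : Fin n → Set (EuclideanSpace ℝ (Fin d)) := fun i =>
    convexHull ℝ (↑((G.filter fun T => i ∈ T).image p))
  have hDconv : ∀ i, Convex ℝ (D i) := fun i => convex_convexHull _ _
  have hDcompact : ∀ i, IsCompact (D i) := fun i =>
    (Finset.finite_toSet _).isCompact_convexHull (𝕜 := ℝ)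
  have hDsub : ∀ i, D i ⊆ C i := by
    intro i
    apply convexHull_min _ (hC i)
    intro z hz
    simp only [coe_image, Set.mem_image, mem_coe, mem_filter] at hz
    obtain ⟨T, ⟨hTG, hiT⟩, rfl⟩ := hz
    exact Set.mem_iInter₂.mp (hpmem T hTG) i hiT
  have hDmem : ∀ T ∈ G, ∀ i ∈ T, p T ∈ D i := by
    intro T hT i hiT
    apply subset_convexHull
    simp only [coe_image, Set.mem_image, mem_coe, mem_filter]
    exact ⟨T, ⟨hT, hiT⟩, rfl⟩
  have hTcard : ∀ T ∈ G, T.card = d + 1 := fun T hT =>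
    (Finset.mem_powersetCard.mp (mem_filter.mp hT).1).2
  -- minimum-norm points
  have hmin : ∀ T ∈ G, ∃ y ∈ ⋂ i ∈ T, D i, IsMinOn norm (⋂ i ∈ T, D i) y := by
    intro T hT
    have hTne : T.Nonempty := by
      rw [← card_pos, hTcard T hT]; omega
    obtain ⟨i0, hi0⟩ := hTne
    have hclosed : IsClosed (⋂ i ∈ T, D i) :=
      isClosed_biInter fun i _ => (hDcompact i).isClosed
    have hcomp : IsCompact (⋂ i ∈ T, D i) :=
      (hDcompact i0).of_isClosed_subset hclosed (Set.biInter_subset_of_mem hi0)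
    have hne : (⋂ i ∈ T, D i).Nonempty := ⟨p T, Set.mem_iInter₂.mpr (hDmem T hT)⟩
    exact hcomp.exists_isMinOn hne continuous_norm.continuousOn
  choose! x hxmem hxmin using hmin
  have hkeyall : ∀ T ∈ G, ∃ S ⊆ T, S.card = d ∧ IsMinOn norm (⋂ i ∈ S, D i) (x T) :=
    fun T hT => key_lemma hDconv (hTcard T hT) (hxmem T hT) (hxmin T hT)
  choose! g hgsub hgcard hgmin using hkeyall
  -- pigeonhole over d-element sets
  set t := (Finset.univ : Finset (Fin n)).powersetCard d with htdef
  have hmaps : ∀ T ∈ G, g T ∈ t := fun T hT =>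
    mem_powersetCard.mpr ⟨subset_univ _, hgcard T hT⟩
  have htne : t.Nonempty := by
    obtain ⟨T0, hT0⟩ : G.Nonempty := card_pos.mp hGcardpos
    exact ⟨g T0, hmaps T0 hT0⟩
  obtain ⟨S, hSt, hSmax⟩ := exists_max_image t (fun S => (G.filter fun T => g T = S).card) htne
  set F := G.filter fun T => g T = S with hFdef
  have hsum : ∑ S' ∈ t, (G.filter fun T => g T = S').card = G.card :=
    (card_eq_sum_card_fiberwise hmaps).symm
  have hGle : G.card ≤ t.card * F.card := by
    calc G.card = ∑ S' ∈ t, (G.filter fun T => g T = S').card := hsum.symm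
    _ ≤ ∑ _S' ∈ t, F.card := Finset.sum_le_sum fun S' hS' => hSmax S' hS'
    _ = t.card * F.card := by rw [Finset.sum_const, smul_eq_mul]
  have htcard : t.card = n.choose d := by
    rw [htdef, card_powersetCard, card_univ, Fintype.card_fin]
  have hFpos : 0 < F.card := by
    by_contra h
    push_neg at h
    interval_cases hF : F.card
    · omega
  obtain ⟨T₀, hT₀F⟩ : F.Nonempty := card_pos.mp hFpos
  -- all min points in the fiber coincide
  have hconvS : Convex ℝ (⋂ i ∈ S, D i) := convex_iInter₂ fun i _ => hDconv i
  have hmemS : ∀ T ∈ F, x T ∈ ⋂ i ∈ S, D i := by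
    intro T hTF
    obtain ⟨hTG, hgT⟩ := mem_filter.mp hTF
    exact Set.mem_iInter₂.mpr fun i hiS =>
      Set.mem_iInter₂.mp (hxmem T hTG) i (hgsub T hTG (hgT ▸ hiS))
  have hminS : ∀ T ∈ F, IsMinOn norm (⋂ i ∈ S, D i) (x T) := by
    intro T hTF
    obtain ⟨hTG, hgT⟩ := mem_filter.mp hTF
    exact hgT ▸ hgmin T hTG
  have hxeq : ∀ T ∈ F, x T = x T₀ := fun T hTF =>
    minnorm_unique hconvS (hmemS T hTF) (hmemS T₀ hT₀F) (hminS T hTF) (hminS T₀ hT₀F)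
  -- the big index set
  set J := F.biUnion id with hJdef
  have hx0J : x T₀ ∈ ⋂ j ∈ J, C j := by
    apply Set.mem_iInter₂.mpr
    intro j hj
    obtain ⟨T, hTF, hjT⟩ := mem_biUnion.mp hj
    have hTG := (mem_filter.mp hTF).1
    have hxT : x T ∈ D j := Set.mem_iInter₂.mp (hxmem T hTG) j hjT
    rw [hxeq T hTF] at hxT
    exact hDsub j hxT
  -- |F| ≤ |J| via the map T ↦ unique element of T \ S
  have huniq : ∀ T ∈ F, ∃ a, T \ S = {a} := by
    intro T hTF
    obtain ⟨hTG, hgT⟩ := mem_filter.mp hTF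
    apply card_eq_one.mp
    have hST : S ⊆ T := hgT ▸ hgsub T hTG
    have hScard : S.card = d := hgT ▸ hgcard T hTG
    rw [card_sdiff_of_subset hST, hTcard T hTG, hScard]; omega
  have hne : Nonempty (Fin n) := ⟨⟨0, by omega⟩⟩
  choose! e he using huniq
  have heJ : ∀ T ∈ F, e T ∈ J := by
    intro T hTF
    have : e T ∈ T \ S := by rw [he T hTF]; exact mem_singleton_self _
    exact mem_biUnion.mpr ⟨T, hTF, (sdiff_subset) this⟩
  have hinj : Set.InjOn e F := by
    intro T1 h1 T2 h2 hee
    have hST1 : S ⊆ T1 := (mem_filter.mp h1).2 ▸ hgsub T1 (mem_filter.mp h1).1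
    have hST2 : S ⊆ T2 := (mem_filter.mp h2).2 ▸ hgsub T2 (mem_filter.mp h2).1
    have e1 : T1 = S ∪ {e T1} := by
      rw [← he T1 h1, union_sdiff_of_subset hST1]
    have e2 : T2 = S ∪ {e T2} := by
      rw [← he T2 h2, union_sdiff_of_subset hST2]
    rw [e1, e2, hee]
  have hFJ : F.card ≤ J.card := card_le_card_of_injOn e heJ hinj
  refine ⟨J, ?_, ⟨x T₀, hx0J⟩⟩
  -- arithmetic
  have hid : (n.choose (d + 1)) * (d + 1) = n.choose d * (n - d) :=
    Nat.choose_succ_right_eq n d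
  have hnd : n ≤ (d + 1) * (n - d) := by
    obtain ⟨k, rfl⟩ : ∃ k, n = d + 1 + k := ⟨n - (d + 1), by omega⟩
    have h1 : d + 1 + k - d = 1 + k := by omega
    rw [h1, Nat.mul_add, Nat.mul_one]
    nlinarith
  have hc0pos : 0 < (n.choose d : ℝ) := by
    exact_mod_cast Nat.choose_pos (by omega : d ≤ n)
  have hidR : (n.choose (d + 1) : ℝ) * (d + 1) = (n.choose d : ℝ) * ((n : ℝ) - d) := by
    have hdn : (d : ℝ) ≤ n := by exact_mod_cast (by omega : d ≤ n)
    have := congrArg (Nat.cast (R := ℝ)) hid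
    push_cast [Nat.cast_sub (by omega : d ≤ n)] at this
    linarith [this]
  have hndR : (n : ℝ) ≤ ((d : ℝ) + 1) * ((n : ℝ) - d) := by
    have h : ((n : ℝ)) ≤ ((d + 1 : ℕ) : ℝ) * (((n - d : ℕ) : ℝ)) := by exact_mod_cast hnd
    push_cast [Nat.cast_sub (by omega : d ≤ n)] at h
    linarith [h]
  have hGleR : (G.card : ℝ) ≤ (n.choose d : ℝ) * F.card := by
    have : (G.card : ℝ) ≤ (t.card : ℝ) * F.card := by exact_mod_cast hGle
    rwa [htcard] at this
  have hFge : α * ((n : ℝ) - d) ≤ ((d : ℝ) + 1) * F.card := by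
    have h1 : α * (n.choose (d + 1) : ℝ) * ((d : ℝ) + 1) ≤
        (n.choose d : ℝ) * F.card * ((d : ℝ) + 1) := by
      apply mul_le_mul_of_nonneg_right (le_trans hcount hGleR) (by positivity)
    have h2 : α * ((n.choose d : ℝ) * ((n : ℝ) - d)) ≤ (n.choose d : ℝ) * F.card * ((d:ℝ)+1) := by
      calc α * ((n.choose d : ℝ) * ((n : ℝ) - d)) = α * (n.choose (d+1) : ℝ) * ((d:ℝ)+1) := by
            rw [← hidR]; push_cast; ring
        _ ≤ _ := h1
    have h3 : (n.choose d : ℝ) * (α * ((n:ℝ) - d)) ≤ (n.choose d : ℝ) * (((d:ℝ)+1) * F.card) := by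
      calc (n.choose d : ℝ) * (α * ((n:ℝ) - d)) = α * ((n.choose d : ℝ) * ((n : ℝ) - d)) := by ring
        _ ≤ (n.choose d : ℝ) * F.card * ((d:ℝ)+1) := h2
        _ = (n.choose d : ℝ) * (((d:ℝ)+1) * F.card) := by ring
    exact le_of_mul_le_mul_left h3 hc0pos
  have hJR : (F.card : ℝ) ≤ J.card := by exact_mod_cast hFJ
  have hd1pos : (0:ℝ) < (d:ℝ) + 1 := by positivity
  have hstep : α / ((d + 1 : ℝ)) ^ 2 * (n : ℝ) ≤ (F.card : ℝ) := by
    rw [div_mul_eq_mul_div, div_le_iff₀ (by positivity)]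
    have e1 : α * (n:ℝ) ≤ α * (((d:ℝ) + 1) * ((n:ℝ) - d)) :=
      mul_le_mul_of_nonneg_left hndR hα.le
    have e2 : ((d:ℝ) + 1) * (α * ((n:ℝ) - d)) ≤ ((d:ℝ) + 1) * (((d:ℝ) + 1) * F.card) :=
      mul_le_mul_of_nonneg_left hFge (by positivity)
    nlinarith [e1, e2]
  linarith [hstep, hJR]
end

section
/- Let X be a finite set of points in ℝ^d partitioned into d+1 color classes X_1, …, X_{d+1}, and let q ∈ ℝ^d. Suppose that for every colorful tuple (x_1, …, x_{d+1}) with x_i ∈ X_i for all i, the point q is not contained in conv{x_1, …, x_{d+1}}. Then there exists an index i with q ∉ conv(X_i). -/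
open scoped RealInnerProductSpace

/-- Max principle: a linear functional on a convex hull of a finite set is bounded by its
value at some point of the set. -/
lemma aux_exists_inner_ge {E : Type*} [NormedAddCommGroup E] [InnerProductSpace ℝ E]
    (s : Finset E) (v q : E) (hq : q ∈ convexHull ℝ (s : Set E)) :
    ∃ y ∈ s, ⟪v, q⟫ ≤ ⟪v, y⟫ := by
  have hne : s.Nonempty := by
    rcases s.eq_empty_or_nonempty with rfl | hne
    · simp at hq
    · exact hne
  obtain ⟨b, hb, hmax⟩ := s.exists_max_image (fun y => ⟪v, y⟫) hne
  refine ⟨b, hb, ?_⟩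
  have hlin : IsLinearMap ℝ (fun y : E => ⟪v, y⟫) :=
    ⟨fun a c => inner_add_right v a c, fun r a => real_inner_smul_right v a r⟩
  have hsub : convexHull ℝ (s : Set E) ⊆ {y | ⟪v, y⟫ ≤ ⟪v, b⟫} :=
    convexHull_min (fun y hy => hmax y hy) (convex_halfSpace_le hlin _)
  exact hsub hq

/-- If `p` is in the convex hull of the `d+1` points `x i` of `ℝ^d`, and all points of the hull
lie in the closed halfspace `⟪v, · - p⟫ ≤ 0` with `v ≠ 0`, then `p` lies in the convex hull
of the points with one index removed. -/
lemma aux_exists_drop (d : ℕ) (x : Fin (d + 1) → EuclideanSpace ℝ (Fin d))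
    (hinj : Function.Injective x) {p v : EuclideanSpace ℝ (Fin d)}
    (hp : p ∈ convexHull ℝ (Set.range x)) (hv : v ≠ 0)
    (hsep : ∀ w ∈ convexHull ℝ (Set.range x), ⟪v, w - p⟫ ≤ 0) :
    ∃ i, p ∈ convexHull ℝ (x '' {i}ᶜ) := by
  classical
  by_contra hcon
  push_neg at hcon
  obtain ⟨ι, hfin, z, w, hzx, haff, hwpos, hwsum, hzsum⟩ :=
    eq_pos_convex_span_of_mem_convexHull hp
  -- every `x i` appears among the `z j`
  have hrange : ∀ i, x i ∈ Set.range z := by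
    intro i
    by_contra hxi
    have hsub : Set.range z ⊆ x '' {i}ᶜ := by
      intro a ha
      obtain ⟨j, hj⟩ := hzx ha
      refine ⟨j, ?_, hj⟩
      intro hji
      rw [Set.mem_singleton_iff] at hji
      subst hji
      exact hxi (hj ▸ ha)
    have hpz : p ∈ convexHull ℝ (Set.range z) := by
      rw [← hzsum]
      exact (convex_convexHull ℝ (Set.range z)).sum_mem
        (fun j _ => (hwpos j).le) hwsum
        (fun j _ => subset_convexHull ℝ _ (Set.mem_range_self j))
    exact hcon i (convexHull_mono hsub hpz)
  -- all inner products vanish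
  have hz_le : ∀ j, ⟪v, z j - p⟫ ≤ 0 := fun j =>
    hsep _ (subset_convexHull ℝ _ (hzx (Set.mem_range_self j)))
  have hsum0 : ∑ j, w j * ⟪v, z j - p⟫ = 0 := by
    have : ∑ j, w j • (z j - p) = 0 := by
      rw [Finset.sum_congr rfl (fun j _ => smul_sub (w j) (z j) p)]
      rw [Finset.sum_sub_distrib, hzsum, ← Finset.sum_smul, hwsum, one_smul, sub_self]
    calc ∑ j, w j * ⟪v, z j - p⟫
        = ⟪v, ∑ j, w j • (z j - p)⟫ := by
          rw [inner_sum]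
          exact Finset.sum_congr rfl fun j _ => (real_inner_smul_right v _ (w j)).symm
      _ = 0 := by rw [this, inner_zero_right]
  have hz0 : ∀ j, ⟪v, z j - p⟫ = 0 := by
    have := (Finset.sum_eq_zero_iff_of_nonpos
      (fun j (_ : j ∈ Finset.univ) =>
        mul_nonpos_of_nonneg_of_nonpos (hwpos j).le (hz_le j))).mp hsum0
    intro j
    have hj := this j (Finset.mem_univ j)
    rcases mul_eq_zero.mp hj with h0 | h0
    · exact absurd h0 (ne_of_gt (hwpos j))
    · exact h0
  have hx0 : ∀ i, ⟪v, x i - p⟫ = 0 := by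
    intro i
    obtain ⟨j, hj⟩ := hrange i
    rw [← hj]; exact hz0 j
  -- dimension count
  set f : EuclideanSpace ℝ (Fin d) →ₗ[ℝ] ℝ := (innerSL ℝ v).toLinearMap with hf
  have hfv : f v ≠ 0 := by
    simp only [hf, ContinuousLinearMap.coe_coe, innerSL_apply_apply]
    rw [real_inner_self_eq_norm_sq]
    exact pow_ne_zero 2 (norm_ne_zero_iff.mpr hv)
  have hfne : f ≠ 0 := fun h0 => hfv (by rw [h0]; rfl)
  have hker : Module.finrank ℝ (LinearMap.ker f) + 1 = d := by
    have := Module.Dual.finrank_ker_add_one_of_ne_zero hfne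
    rwa [finrank_euclideanSpace_fin] at this
  -- the vector span of `range x` is contained in `ker f`
  have hspan : vectorSpan ℝ (Set.range x) ≤ LinearMap.ker f := by
    rw [vectorSpan_def]
    apply Submodule.span_le.mpr
    rintro u hu
    rw [Set.mem_vsub] at hu
    obtain ⟨a, ha, b, hb, rfl⟩ := hu
    obtain ⟨i, rfl⟩ := ha
    obtain ⟨j, rfl⟩ := hb
    have : (x i : EuclideanSpace ℝ (Fin d)) -ᵥ x j = (x i - p) - (x j - p) := by
      simp [vsub_eq_sub]
    rw [SetLike.mem_coe, LinearMap.mem_ker, this, map_sub]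
    simp only [hf, ContinuousLinearMap.coe_coe, innerSL_apply_apply]
    rw [hx0 i, hx0 j, sub_zero]
  -- `z` is affinely independent with `d+1` points spanning `range x`
  have hzinj : Function.Injective z := haff.injective
  have hrzx : Set.range z = Set.range x :=
    Set.Subset.antisymm hzx (fun a ⟨i, hi⟩ => hi ▸ hrange i)
  have hcard : Fintype.card ι = d + 1 := by
    have h1 : Nat.card (Set.range z) = Nat.card ι := Nat.card_range_of_injective hzinj
    have h2 : Nat.card (Set.range x) = Nat.card (Fin (d + 1)) :=
      Nat.card_range_of_injective hinj
    rw [hrzx, h2] at h1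
    simpa [Nat.card_eq_fintype_card] using h1.symm
  have hfr : Module.finrank ℝ (vectorSpan ℝ (Set.range z)) = d :=
    haff.finrank_vectorSpan hcard
  rw [hrzx] at hfr
  have hle : Module.finrank ℝ (vectorSpan ℝ (Set.range x)) ≤
      Module.finrank ℝ (LinearMap.ker f) := Submodule.finrank_mono hspan
  omega

/-- **Colorful Carathéodory theorem** (Bárány): if `X` is partitioned into `d+1` color
classes `X 0, …, X d` and no colorful tuple contains `q` in its convex hull, then some
color class does not contain `q` in its convex hull. -/
theorem colorful_caratheodory (d : ℕ)
    (X : Fin (d + 1) → Finset (EuclideanSpace ℝ (Fin d)))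
    (hdisj : ∀ i j, i ≠ j → Disjoint (X i) (X j))
    (q : EuclideanSpace ℝ (Fin d))
    (h : ∀ x : Fin (d + 1) → EuclideanSpace ℝ (Fin d),
      (∀ i, x i ∈ X i) → q ∉ convexHull ℝ (Set.range x)) :
    ∃ i, q ∉ convexHull ℝ ((X i : Set (EuclideanSpace ℝ (Fin d)))) := by
  classical
  by_contra hc
  push_neg at hc
  have hXne : ∀ i, (X i).Nonempty := by
    intro i
    rcases (X i).eq_empty_or_nonempty with he | hne
    · exfalso; have := hc i; rw [he] at this; simp at this
    · exact hne
  set f : (Fin (d + 1) → EuclideanSpace ℝ (Fin d)) → ℝ :=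
    fun x => Metric.infDist q (convexHull ℝ (Set.range x)) with hfdef
  have hTne : (Fintype.piFinset X).Nonempty :=
    ⟨fun i => (hXne i).choose, by
      rw [Fintype.mem_piFinset]; exact fun i => (hXne i).choose_spec⟩
  obtain ⟨x₀, hx₀T, hx₀min⟩ := Finset.exists_min_image (Fintype.piFinset X) f hTne
  have hx₀ : ∀ i, x₀ i ∈ X i := Fintype.mem_piFinset.mp hx₀T
  have hKc : IsCompact (convexHull ℝ (Set.range x₀)) :=
    (Set.finite_range x₀).isCompact_convexHull (𝕜 := ℝ)
  have hKne : (convexHull ℝ (Set.range x₀)).Nonempty :=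
    (Set.range_nonempty x₀).convexHull
  obtain ⟨p, hpK, hpd⟩ := hKc.exists_infDist_eq_dist hKne q
  have hqK : q ∉ convexHull ℝ (Set.range x₀) := h x₀ hx₀
  have hqp : q ≠ p := fun e => hqK (e ▸ hpK)
  set v : EuclideanSpace ℝ (Fin d) := q - p with hvdef
  have hv0 : v ≠ 0 := sub_ne_zero.mpr hqp
  -- separation property of the nearest point
  have hsep : ∀ w ∈ convexHull ℝ (Set.range x₀), ⟪v, w - p⟫ ≤ 0 := by
    rw [← norm_eq_iInf_iff_real_inner_le_zero (convex_convexHull ℝ _) hpK]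
    have hiInf : Metric.infDist q (convexHull ℝ (Set.range x₀)) =
        ⨅ w : convexHull ℝ (Set.range x₀), ‖q - (w : EuclideanSpace ℝ (Fin d))‖ := by
      rw [Metric.infDist_eq_iInf]
      simp only [dist_eq_norm]
    rw [← hiInf, hpd, dist_eq_norm]
  -- `x₀` is injective
  have hinj : Function.Injective x₀ := by
    intro i j hij
    by_contra hne
    exact Finset.disjoint_left.mp (hdisj i j hne) (hx₀ i) (hij ▸ hx₀ j)
  obtain ⟨i, hpi⟩ := aux_exists_drop d x₀ hinj hpK hv0 hsep
  obtain ⟨y, hyX, hyq⟩ := aux_exists_inner_ge (X i) v q (hc i)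
  -- the inner product with the swapped-in point is large
  have hc0 : ⟪v, y - p⟫ > 0 := by
    have h1 : ⟪v, y - p⟫ = ⟪v, y⟫ - ⟪v, p⟫ := inner_sub_right v y p
    have h2 : ⟪v, q - p⟫ = ⟪v, q⟫ - ⟪v, p⟫ := inner_sub_right v q p
    have h3 : ⟪v, q - p⟫ = ‖v‖ ^ 2 := by
      rw [← hvdef, real_inner_self_eq_norm_sq]
    have h4 : (0 : ℝ) < ‖v‖ ^ 2 := pow_pos (norm_pos_iff.mpr hv0) 2
    linarith
  set x₁ : Fin (d + 1) → EuclideanSpace ℝ (Fin d) := Function.update x₀ i y with hx₁def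
  have hx₁ : ∀ j, x₁ j ∈ X j := by
    intro j
    rcases eq_or_ne j i with rfl | hji
    · rw [hx₁def, Function.update_self]; exact hyX
    · rw [hx₁def, Function.update_of_ne hji]; exact hx₀ j
  have hx₁T : x₁ ∈ Fintype.piFinset X := Fintype.mem_piFinset.mpr hx₁
  have hpK₁ : p ∈ convexHull ℝ (Set.range x₁) := by
    refine convexHull_mono ?_ hpi
    rintro a ⟨j, hji, rfl⟩
    exact ⟨j, by rw [hx₁def, Function.update_of_ne hji]⟩
  have hyK₁ : y ∈ convexHull ℝ (Set.range x₁) :=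
    subset_convexHull ℝ _ ⟨i, by rw [hx₁def, Function.update_self]⟩
  -- move from `p` towards `y`, decreasing the distance to `q`
  set c : ℝ := ⟪v, y - p⟫ with hcdef
  set b : EuclideanSpace ℝ (Fin d) := y - p with hbdef
  have hb0 : b ≠ 0 := by
    intro h0
    rw [hcdef, h0, inner_zero_right] at hc0
    exact lt_irrefl 0 hc0
  have hbn : (0 : ℝ) < ‖b‖ ^ 2 := pow_pos (norm_pos_iff.mpr hb0) 2
  set s : ℝ := min 1 (c / ‖b‖ ^ 2) with hsdef
  have hs0 : 0 < s := lt_min one_pos (div_pos hc0 hbn)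
  have hs1 : s ≤ 1 := min_le_left _ _
  have hsc : s * ‖b‖ ^ 2 ≤ c := by
    have := min_le_right 1 (c / ‖b‖ ^ 2)
    calc s * ‖b‖ ^ 2 ≤ (c / ‖b‖ ^ 2) * ‖b‖ ^ 2 := by
          apply mul_le_mul_of_nonneg_right this hbn.le
      _ = c := div_mul_cancel₀ c (ne_of_gt hbn)
  set z : EuclideanSpace ℝ (Fin d) := p + s • b with hzdef
  have hzK₁ : z ∈ convexHull ℝ (Set.range x₁) := by
    have hz' : z = (1 - s) • p + s • y := by
      rw [hzdef, hbdef]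
      module
    rw [hz']
    exact (convex_convexHull ℝ (Set.range x₁)) hpK₁ hyK₁ (by linarith) hs0.le (by ring)
  have hdist : dist q z < dist q p := by
    have hqz : q - z = v - s • b := by
      rw [hzdef, hvdef]
      abel
    have hsq : ‖q - z‖ ^ 2 < ‖v‖ ^ 2 := by
      rw [hqz, norm_sub_sq_real]
      have h1 : ⟪v, s • b⟫ = s * c := by
        rw [real_inner_smul_right, ← hcdef]
      have h2 : ‖s • b‖ ^ 2 = s ^ 2 * ‖b‖ ^ 2 := by
        rw [norm_smul, mul_pow, Real.norm_eq_abs, sq_abs]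
      rw [h1, h2]
      nlinarith [mul_le_mul_of_nonneg_left hsc hs0.le, mul_pos hs0 hc0]
    have h3 : dist q z = ‖q - z‖ := dist_eq_norm q z
    have h4 : dist q p = ‖v‖ := by rw [dist_eq_norm, hvdef]
    rw [h3, h4]
    exact lt_of_pow_lt_pow_left₀ 2 (norm_nonneg v) hsq
  have hle1 : f x₁ ≤ dist q z := Metric.infDist_le_dist_of_mem hzK₁
  have hle2 : f x₀ ≤ f x₁ := hx₀min x₁ hx₁T
  have heq : f x₀ = dist q p := hpd
  linarith
end

section
/- Let F be a finite family of convex sets in ℝ^d partitioned into d+1 nonempty color classes F_1, …, F_{d+1}. Suppose that every colorful tuple (D_1, …, D_{d+1}) with D_i ∈ F_i for all i satisfies D_1 ∩ ⋯ ∩ D_{d+1} ≠ ∅. Then there exists an index i such that the intersection of all sets in F_i is nonempty. -/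
open Finset Metric Module

/-!
Among all colorful tuples, pick one whose intersection `D` lies farthest from the origin, and let
`p` be the point of `D` nearest to the origin. The open ball of radius `‖p‖` misses `D`, so by
Helly's theorem (these are `d + 2` convex sets in `ℝ^d`) it already misses the intersection of
`d` of the chosen sets, omitting say the one of color `i`. Since color class `i` has no common
point, some member `C` of it avoids `p`; swapping `C` in, the new intersection lies in that
`d`-fold intersection, which by strict convexity of the norm meets the closed ball of radius `‖p‖`
only at `p`. So the new tuple lies farther from the origin, contradicting maximality. For arbitrary
convex sets, first shrink each set to the convex hull of the common points of the colorful tuples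
containing it.
-/

theorem exists_disjoint_biInter_ne_of_disjoint_iInter {𝕜 E ι : Type*} [Field 𝕜] [LinearOrder 𝕜]
    [IsStrictOrderedRing 𝕜] [AddCommGroup E] [Module 𝕜 E] [FiniteDimensional 𝕜 E] [Fintype ι]
    (hcard : finrank 𝕜 E < Fintype.card ι) {D : ι → Set E} (hD : ∀ i, Convex 𝕜 (D i))
    (hDne : (⋂ i, D i).Nonempty) {B : Set E} (hB : Convex 𝕜 B)
    (hdisj : Disjoint B (⋂ i, D i)) : ∃ i, Disjoint B (⋂ (j) (_ : j ≠ i), D j) := by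
  classical
  by_contra! hmeet
  simp only [Set.not_disjoint_iff_nonempty_inter] at hmeet
  let G : Option ι → Set E := fun o => o.elim B D
  obtain ⟨x, hx⟩ : (⋂ o ∈ (univ : Finset (Option ι)), G o).Nonempty := by
    refine Convex.helly_theorem' (𝕜 := 𝕜) (fun o _ => ?_) fun I _ hI => ?_
    · cases o <;> simp [G, hB, hD]
    by_cases hnone : none ∈ I
    · obtain ⟨i, hi⟩ : ∃ i, some i ∉ I := by
        by_contra! hall
        have : I = univ := Finset.eq_univ_of_forall fun o => by cases o <;> simp [hnone, hall]
        rw [this, card_univ, Fintype.card_option] at hI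
        omega
      refine (hmeet i).mono fun x hx => Set.mem_iInter₂.2 fun o ho => ?_
      cases o with
      | none => exact hx.1
      | some j => exact Set.mem_iInter₂.1 hx.2 j (by rintro rfl; exact hi ho)
    · refine hDne.mono fun x hx => Set.mem_iInter₂.2 fun o ho => ?_
      cases o with
      | none => exact absurd ho hnone
      | some j => exact Set.mem_iInter.1 hx j
  exact hdisj.ne_of_mem (Set.mem_iInter₂.1 hx none (mem_univ _))
    (Set.mem_iInter.2 fun i => Set.mem_iInter₂.1 hx (some i) (mem_univ _)) rfl

theorem Convex.eq_of_disjoint_ball {E : Type*} [NormedAddCommGroup E] [NormedSpace ℝ E]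
    [StrictConvexSpace ℝ E] {M : Set E} (hM : Convex ℝ M) {r : ℝ}
    (hdisj : Disjoint (ball 0 r) M) {x y : E} (hx : x ∈ M) (hy : y ∈ M) (hxr : ‖x‖ ≤ r)
    (hyr : ‖y‖ ≤ r) : x = y := by
  by_contra hxy
  have hmid : (1 / 2 : ℝ) • x + (1 / 2 : ℝ) • y ∈ ball (0 : E) r :=
    mem_ball_zero_iff.2 (norm_combo_lt_of_ne hxr hyr hxy (by norm_num) (by norm_num) (by norm_num))
  exact hdisj.ne_of_mem hmid (hM hx hy (by norm_num) (by norm_num) (by norm_num)) rfl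

theorem colorful_helly_of_isClosed {E ι : Type*} [NormedAddCommGroup E] [NormedSpace ℝ E]
    [StrictConvexSpace ℝ E] [FiniteDimensional ℝ E] [Fintype ι] {κ : ι → Type*}
    [∀ i, Finite (κ i)] (hcard : finrank ℝ E < Fintype.card ι) (K : ∀ i, κ i → Set E)
    (hconv : ∀ i c, Convex ℝ (K i c)) (hclosed : ∀ i c, IsClosed (K i c))
    (h : ∀ s : ∀ i, κ i, (⋂ i, K i (s i)).Nonempty) : ∃ i, (⋂ c, K i c).Nonempty := by
  classical
  by_contra! hempty
  have : ∀ i, Nonempty (κ i) := fun i => by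
    by_contra! hi
    simpa using hempty i
  have nearest (s : ∀ i, κ i) : ∃ p ∈ ⋂ i, K i (s i), infDist 0 (⋂ i, K i (s i)) = ‖p‖ := by
    simpa using (isClosed_iInter fun i => hclosed i (s i)).exists_infDist_eq_dist (h s) 0
  obtain ⟨s, hs⟩ := Finite.exists_max fun s : ∀ i, κ i => infDist 0 (⋂ i, K i (s i))
  obtain ⟨p, hpK, hp⟩ := nearest s
  have hdisj : Disjoint (ball 0 ‖p‖) (⋂ i, K i (s i)) :=
    Set.disjoint_left.2 fun x hx hxK => (mem_ball_zero_iff.1 hx).not_ge <| by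
      simpa [hp] using infDist_le_dist_of_mem (x := (0 : E)) hxK
  obtain ⟨i, hi⟩ := exists_disjoint_biInter_ne_of_disjoint_iInter hcard
    (fun i => hconv i (s i)) (h s) (convex_ball 0 _) hdisj
  obtain ⟨c, hpc⟩ : ∃ c, p ∉ K i c := by
    simpa using (Set.eq_empty_iff_forall_notMem.1 (hempty i)) p
  obtain ⟨x, hxK, hx⟩ := nearest (Function.update s i c)
  have hxp : x = p := by
    refine (convex_iInter₂ fun j _ => hconv j (s j)).eq_of_disjoint_ball hi ?_ ?_
      (hx ▸ hp ▸ hs _) le_rfl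
    · exact Set.mem_iInter₂.2 fun j hj => by
        simpa [Function.update_of_ne hj] using Set.mem_iInter.1 hxK j
    · exact Set.mem_iInter₂.2 fun j _ => Set.mem_iInter.1 hpK j
  exact hpc (by simpa [hxp] using Set.mem_iInter.1 hxK i)

theorem colorful_helly_general (d : ℕ)
    (F : Fin (d + 1) → Finset (Set (EuclideanSpace ℝ (Fin d))))
    (hconv : ∀ i, ∀ C ∈ F i, Convex ℝ C)
    (h : ∀ D : Fin (d + 1) → Set (EuclideanSpace ℝ (Fin d)),
      (∀ i, D i ∈ F i) → (⋂ i, D i).Nonempty) :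
    ∃ i, (⋂ C ∈ F i, C).Nonempty := by
  choose w hw using fun s : ∀ i, F i => h (fun i => s i) fun i => (s i).2
  let K (i : Fin (d + 1)) (C : F i) := convexHull ℝ (w '' {s | s i = C})
  obtain ⟨i, x, hx⟩ := colorful_helly_of_isClosed (K := K) (by simp)
    (fun _ _ => convex_convexHull ℝ _)
    (fun _ _ => ((Set.toFinite _).image w).isCompact_convexHull (𝕜 := ℝ) |>.isClosed)
    fun s => ⟨w s, Set.mem_iInter.2 fun i => subset_convexHull ℝ _ ⟨s, rfl, rfl⟩⟩
  refine ⟨i, x, Set.mem_iInter₂.2 fun C hC => ?_⟩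
  refine convexHull_min ?_ (hconv i C hC) (Set.mem_iInter.1 hx ⟨C, hC⟩)
  rintro _ ⟨s, hs : s i = ⟨C, hC⟩, rfl⟩
  simpa [hs] using Set.mem_iInter.1 (hw s) i

/-- **Colorful Helly theorem** (Lovász): if a finite family of convex sets is partitioned
into `d+1` nonempty color classes and every colorful tuple has a common point, then some
color class has a common point. -/
theorem colorful_helly (d : ℕ)
    (F : Fin (d + 1) → Finset (Set (EuclideanSpace ℝ (Fin d))))
    (hne : ∀ i, (F i).Nonempty)
    (hconv : ∀ i, ∀ C ∈ F i, Convex ℝ C)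
    (h : ∀ D : Fin (d + 1) → Set (EuclideanSpace ℝ (Fin d)),
      (∀ i, D i ∈ F i) → (⋂ i, D i).Nonempty) :
    ∃ i, (⋂ C ∈ F i, C).Nonempty :=
  colorful_helly_general d F hconv h
end

section
/- Let F be a finite family of convex sets in ℝ^d partitioned into d+1 nonempty color classes F_1, …, F_{d+1}, and let α > 0. Suppose that at least α·|F_1|·|F_2|⋯|F_{d+1}| of the colorful tuples (D_1, …, D_{d+1}) with D_i ∈ F_i satisfy D_1 ∩ ⋯ ∩ D_{d+1} ≠ ∅. Then there exists an index i and a subfamily G ⊆ F_i with |G| ≥ (α/(d+1))·|F_i| such that the intersection of all sets in G is nonempty. -/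
open scoped Classical

/-!
For an intersecting colorful tuple `g`, let `p g` be the minimizer of the strictly convex function
`‖·‖²` on `⋂ i, F i (g i)` (after shrinking every set to the convex hull of finitely many witness
points, so that minimizers exist). Helly's theorem, applied to these `d + 1` sets together with
the strict sublevel set of `‖·‖²` at `p g`, shows that `p g` already minimizes `‖·‖²` on the
intersection of all sets but one, of some color `c g`. Minimizers are unique, so the tuples of
color `i` that agree outside `i` all contain the same point in their `i`-th set; there are at most
`m i` of them, `m i` being the size of a largest intersecting subfamily of the `i`-th class. Hence
at most `∑ i, m i * ∏ j ≠ i, |F j|` colorful tuples intersect, and averaging over `i` gives the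
theorem.
-/

open Finset Module

namespace Convex

variable {ι 𝕜 E : Type*} [Fintype ι] [Field 𝕜] [LinearOrder 𝕜] [IsStrictOrderedRing 𝕜]
  [AddCommGroup E] [Module 𝕜 E] [FiniteDimensional 𝕜 E]

theorem helly_theorem_of_forall_ne {F : ι → Set E} (h_card : finrank 𝕜 E + 1 < Fintype.card ι)
    (h_convex : ∀ i, Convex 𝕜 (F i)) (h_inter : ∀ k, (⋂ i ≠ k, F i).Nonempty) :
    (⋂ i, F i).Nonempty := by
  simpa using helly_theorem' (s := univ) (fun i _ ↦ h_convex i) fun I _ hI ↦ by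
    obtain ⟨k, -, hk⟩ := exists_mem_notMem_of_card_lt_card (hI.trans_lt h_card)
    exact (h_inter k).mono <| Set.iInter₂_mono' fun i hi ↦ ⟨i, ne_of_mem_of_not_mem hi hk, le_rfl⟩

theorem exists_isMinOn_iInter_ne {A : ι → Set E} {f : E → 𝕜} {p : E}
    (h_card : finrank 𝕜 E < Fintype.card ι) (hA : ∀ i, Convex 𝕜 (A i))
    (hf : ConvexOn 𝕜 Set.univ f) (hp : p ∈ ⋂ i, A i) (hmin : IsMinOn f (⋂ i, A i) p) :
    ∃ k, IsMinOn f (⋂ i ≠ k, A i) p := by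
  by_contra! h
  simp only [isMinOn_iff, not_forall, not_le] at h
  choose q hq hqp using h
  simp only [Set.mem_iInter] at hp hq
  obtain ⟨z, hz⟩ := helly_theorem_of_forall_ne
    (F := fun o : Option ι ↦ o.elim {x ∈ Set.univ | f x < f p} A) (by simpa using h_card)
    (Option.rec (hf.convex_lt _) hA) (Option.rec ⟨p, by simp [Option.forall, hp]⟩
      fun k ↦ ⟨q k, by simpa [Option.forall, hqp k] using hq k⟩)
  simp only [Set.mem_iInter, Option.forall] at hz
  exact (hmin (Set.mem_iInter.2 hz.2)).not_gt hz.1.2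

end Convex

theorem strictConvexOn_norm_sq {E : Type*} [NormedAddCommGroup E] [InnerProductSpace ℝ E] :
    StrictConvexOn ℝ Set.univ fun x : E ↦ ‖x‖ ^ 2 :=
  (strongConvexOn_iff_convex.2 (by simpa using convexOn_const 0 convex_univ)).strictConvexOn
    two_pos

theorem exists_mem_iInter_isMinOn_iInter_ne {ι E : Type*} [Fintype ι] [AddCommGroup E]
    [Module ℝ E] [FiniteDimensional ℝ E] [TopologicalSpace E] [T2Space E] {A : ι → Set E}
    {f : E → ℝ} (hf : ConvexOn ℝ Set.univ f) (hfc : Continuous f)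
    (h_card : finrank ℝ E < Fintype.card ι) (hA : ∀ i, Convex ℝ (A i))
    (hcpt : ∀ i, IsCompact (A i)) (hne : (⋂ i, A i).Nonempty) :
    ∃ p k, p ∈ ⋂ i, A i ∧ IsMinOn f (⋂ i ≠ k, A i) p := by
  have : Nonempty ι := Fintype.card_pos_iff.1 (by omega)
  have hK : IsCompact (⋂ i, A i) := (hcpt (Classical.arbitrary ι)).of_isClosed_subset
    (isClosed_iInter fun i ↦ (hcpt i).isClosed) (Set.iInter_subset _ _)
  obtain ⟨p, hp, hmin⟩ := hK.exists_isMinOn hne hfc.continuousOn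
  obtain ⟨k, hk⟩ := Convex.exists_isMinOn_iInter_ne h_card hA hf hp hmin
  exact ⟨p, k, hp, hk⟩

section Intersecting

variable {κ E : Type*}

noncomputable def maxIntersectingCard [Fintype κ] (A : κ → Set E) : ℕ :=
  ({G : Finset κ | (⋂ j ∈ G, A j).Nonempty} : Finset (Finset κ)).sup card

variable [Fintype κ] {A B : κ → Set E}

theorem card_le_maxIntersectingCard {G : Finset κ} (hG : (⋂ j ∈ G, A j).Nonempty) :
    #G ≤ maxIntersectingCard A :=
  le_sup (f := card) (by simpa using hG)

theorem exists_card_eq_maxIntersectingCard [Nonempty E] (A : κ → Set E) :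
    ∃ G : Finset κ, (⋂ j ∈ G, A j).Nonempty ∧ #G = maxIntersectingCard A := by
  obtain ⟨G, hG, h⟩ := exists_mem_eq_sup
    ({G : Finset κ | (⋂ j ∈ G, A j).Nonempty} : Finset (Finset κ)) ⟨∅, by simp⟩ card
  exact ⟨G, by simpa using hG, h.symm⟩

theorem maxIntersectingCard_mono (h : ∀ j, A j ⊆ B j) :
    maxIntersectingCard A ≤ maxIntersectingCard B := by
  refine sup_mono fun G hG ↦ ?_
  simp only [mem_filter_univ] at hG ⊢
  exact hG.mono (Set.iInter₂_mono fun j _ ↦ h j)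

end Intersecting

section ColorfulTuples

variable {ι E : Type*} {κ : ι → Type*} [∀ i, Fintype (κ i)]

theorem card_le_maxIntersectingCard_of_agree_off {F : ∀ i, κ i → Set E} {L : Finset (∀ i, κ i)}
    {i : ι} (hL : ∀ g ∈ L, ∀ g' ∈ L, ∀ j ≠ i, g j = g' j) {p : E}
    (hp : ∀ g ∈ L, p ∈ F i (g i)) : #L ≤ maxIntersectingCard (F i) := by
  have hinj : Set.InjOn (fun g : ∀ i, κ i ↦ g i) L := fun g hg g' hg' hgi ↦ funext fun j ↦ by
    by_cases hj : j = i
    · subst hj; exact hgi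
    · exact hL g hg g' hg' j hj
  rw [← card_image_of_injOn hinj]
  refine card_le_maxIntersectingCard ⟨p, ?_⟩
  simp only [Set.mem_iInter, mem_image]
  rintro _ ⟨g, hg, rfl⟩
  exact hp g hg

variable [Fintype ι] [DecidableEq ι]

noncomputable def intersectingTuples (F : ∀ i, κ i → Set E) : Finset (∀ i, κ i) :=
  {g | (⋂ i, F i (g i)).Nonempty}

theorem card_le_mul_prod_ne_of_card_fiber_le (T : Finset (∀ i, κ i)) (i : ι) (m : ℕ)
    (h : ∀ g ∈ T, #{g' ∈ T | ∀ j ≠ i, g' j = g j} ≤ m) :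
    #T ≤ m * ∏ j : {j // j ≠ i}, Fintype.card (κ j) := by
  let restrict (g : ∀ i, κ i) (j : {j // j ≠ i}) : κ j := g j
  calc #T ≤ m * #(T.image restrict) := card_le_mul_card_image T m fun b hb ↦ by
        obtain ⟨g, hg, rfl⟩ := mem_image.1 hb
        simpa [restrict, funext_iff] using h g hg
    _ ≤ m * ∏ j : {j // j ≠ i}, Fintype.card (κ j) := by
        gcongr
        simpa using card_le_univ (T.image restrict)

theorem exists_isCompact_convex_subfamily [AddCommGroup E] [Module ℝ E] [TopologicalSpace E]
    [IsTopologicalAddGroup E] [ContinuousSMul ℝ E] (F : ∀ i, κ i → Set E)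
    (hconv : ∀ i j, Convex ℝ (F i j)) :
    ∃ F' : ∀ i, κ i → Set E, (∀ i j, F' i j ⊆ F i j) ∧ (∀ i j, Convex ℝ (F' i j)) ∧
      (∀ i j, IsCompact (F' i j)) ∧ intersectingTuples F ⊆ intersectingTuples F' := by
  set S := intersectingTuples F
  have : ∀ g ∈ S, ∃ x, x ∈ ⋂ i, F i (g i) := by simp [S, intersectingTuples]
  choose! x hx using this
  refine ⟨fun i j ↦ convexHull ℝ (x '' {g | g ∈ S ∧ g i = j}),
    fun i j ↦ convexHull_min ?_ (hconv i j), fun i j ↦ convex_convexHull _ _,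
    fun i j ↦ ((S.finite_toSet.subset (t := {g | g ∈ S ∧ g i = j}) fun g hg ↦ hg.1).image
      x).isCompact_convexHull (𝕜 := ℝ),
    fun g hg ↦ ?_⟩
  · rintro _ ⟨g, ⟨hg, rfl⟩, rfl⟩
    exact Set.mem_iInter.1 (hx g hg) i
  · simp only [intersectingTuples, mem_filter_univ]
    exact ⟨x g, Set.mem_iInter.2 fun i ↦ subset_convexHull _ _ ⟨g, ⟨hg, rfl⟩, rfl⟩⟩

theorem card_intersectingTuples_le_of_isCompact [AddCommGroup E] [Module ℝ E]
    [FiniteDimensional ℝ E] [TopologicalSpace E] [T2Space E] {f : E → ℝ}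
    (hf : StrictConvexOn ℝ Set.univ f) (hfc : Continuous f) (h_card : finrank ℝ E < Fintype.card ι)
    {F : ∀ i, κ i → Set E} (hconv : ∀ i j, Convex ℝ (F i j)) (hcpt : ∀ i j, IsCompact (F i j)) :
    #(intersectingTuples F) ≤
      ∑ i, maxIntersectingCard (F i) * ∏ j : {j // j ≠ i}, Fintype.card (κ j) := by
  have : Nonempty ι := Fintype.card_pos_iff.1 (by omega)
  have key (g) (hg : g ∈ intersectingTuples F) :
      ∃ p k, p ∈ ⋂ i, F i (g i) ∧ IsMinOn f (⋂ i ≠ k, F i (g i)) p :=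
    exists_mem_iInter_isMinOn_iInter_ne hf.convexOn hfc h_card (fun i ↦ hconv i (g i))
      (fun i ↦ hcpt i (g i)) (by simpa [intersectingTuples] using hg)
  choose! p c hp hc using key
  have hp_eq : ∀ g ∈ intersectingTuples F, ∀ g' ∈ intersectingTuples F, c g = c g' →
      (∀ j ≠ c g, g j = g' j) → p g = p g' := by
    intro g hg g' hg' hc_eq hgg'
    have hset : (⋂ i ≠ c g', F i (g' i)) = ⋂ i ≠ c g, F i (g i) := by
      simp_rw [← hc_eq]
      exact Set.iInter₂_congr fun j hj ↦ by rw [hgg' j hj]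
    refine (hf.subset (Set.subset_univ _) (convex_iInter₂ fun i _ ↦ hconv i (g i))).eq_of_isMinOn
      (hc g hg) (hset ▸ hc g' hg') ?_ ?_
    · exact Set.mem_iInter₂.2 fun i _ ↦ Set.mem_iInter.1 (hp g hg) i
    · exact hset ▸ Set.mem_iInter₂.2 fun i _ ↦ Set.mem_iInter.1 (hp g' hg') i
  rw [card_eq_sum_card_fiberwise fun g _ ↦ mem_univ (c g)]
  gcongr with i
  refine card_le_mul_prod_ne_of_card_fiber_le _ i _ fun g hg ↦
    card_le_maxIntersectingCard_of_agree_off (p := p g) ?_ ?_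
  · simp only [mem_filter]
    intro g₁ ⟨_, hg₁⟩ g₂ ⟨_, hg₂⟩ j hj
    rw [hg₁ j hj, hg₂ j hj]
  · simp only [mem_filter] at hg ⊢
    rintro g' ⟨⟨hg', hcg'⟩, hgg'⟩
    rw [hp_eq g hg.1 g' hg' (hg.2.trans hcg'.symm) fun j hj ↦ (hgg' j (hg.2 ▸ hj)).symm]
    exact Set.mem_iInter.1 (hp g' hg') i

theorem card_intersectingTuples_le [NormedAddCommGroup E] [InnerProductSpace ℝ E]
    [FiniteDimensional ℝ E] (h_card : finrank ℝ E < Fintype.card ι) {F : ∀ i, κ i → Set E}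
    (hconv : ∀ i j, Convex ℝ (F i j)) :
    #(intersectingTuples F) ≤
      ∑ i, maxIntersectingCard (F i) * ∏ j : {j // j ≠ i}, Fintype.card (κ j) := by
  obtain ⟨F', hF'F, hF'conv, hF'cpt, hsub⟩ := exists_isCompact_convex_subfamily F hconv
  calc #(intersectingTuples F) ≤ #(intersectingTuples F') := card_le_card hsub
    _ ≤ ∑ i, maxIntersectingCard (F' i) * ∏ j : {j // j ≠ i}, Fintype.card (κ j) :=
        card_intersectingTuples_le_of_isCompact strictConvexOn_norm_sq (by fun_prop) h_card
          hF'conv hF'cpt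
    _ ≤ _ := by
        gcongr with i
        exact maxIntersectingCard_mono (hF'F i)

end ColorfulTuples

theorem exists_div_card_mul_le_of_mul_prod_le {ι : Type*} [Fintype ι] [DecidableEq ι]
    [Nonempty ι] {n m : ι → ℕ} (hn : ∀ i, 1 ≤ n i) {α : ℝ}
    (h : α * ∏ i, (n i : ℝ) ≤ ∑ i, (m i : ℝ) * ∏ j : {j // j ≠ i}, (n j : ℝ)) :
    ∃ i, α / Fintype.card ι * n i ≤ m i := by
  have hP : ∀ i : ι, 0 < ∏ j : {j // j ≠ i}, (n j : ℝ) :=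
    fun i ↦ prod_pos fun j _ ↦ Nat.cast_pos.2 (hn j.1)
  have hsum : ∑ i, α / Fintype.card ι * n i * ∏ j : {j // j ≠ i}, (n j : ℝ) =
      α * ∏ i, (n i : ℝ) := by
    rw [sum_congr rfl fun i _ ↦ by
      rw [mul_assoc, ← Fintype.prod_eq_mul_prod_subtype_ne (fun j ↦ (n j : ℝ)) i]]
    simp [field]
  obtain ⟨i, -, hi⟩ := exists_le_of_sum_le univ_nonempty (hsum.trans_le h)
  exact ⟨i, le_of_mul_le_mul_right hi (hP i)⟩

theorem fractional_colorful_helly_general (d : ℕ) (α : ℝ)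
    (n : Fin (d + 1) → ℕ) (hn : ∀ i, 1 ≤ n i)
    (F : (i : Fin (d + 1)) → Fin (n i) → Set (EuclideanSpace ℝ (Fin d)))
    (hconv : ∀ i j, Convex ℝ (F i j))
    (h : α * ∏ i, (n i : ℝ) ≤
      (((Finset.univ : Finset ((i : Fin (d + 1)) → Fin (n i))).filter fun g =>
          (⋂ i, F i (g i)).Nonempty).card : ℝ)) :
    ∃ i : Fin (d + 1), ∃ G : Finset (Fin (n i)),
      (α / (d + 1)) * (n i : ℝ) ≤ (G.card : ℝ) ∧ (⋂ j ∈ G, F i j).Nonempty := by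
  have hcount : (#(intersectingTuples F) : ℝ) ≤
      ∑ i, (maxIntersectingCard (F i) : ℝ) * ∏ j : {j // j ≠ i}, (n j : ℝ) := by
    simpa using (Nat.cast_le (α := ℝ)).2 (card_intersectingTuples_le (F := F) (by simp) hconv)
  obtain ⟨i, hi⟩ := exists_div_card_mul_le_of_mul_prod_le hn (h.trans hcount)
  obtain ⟨G, hG, hcard⟩ := exists_card_eq_maxIntersectingCard (F i)
  exact ⟨i, G, by simpa [hcard] using hi, hG⟩

/-- **Fractional colorful Helly theorem** (Bárány–Fodor–Montejano–Oliveros–Pór):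
the `i`-th color class is the indexed family `F i : Fin (n i) → Set ℝ^d` (repetitions
allowed), a colorful tuple is a choice function `g` with `g i` an index into the `i`-th
class. -/
theorem fractional_colorful_helly (d : ℕ) (α : ℝ) (hα : 0 < α)
    (n : Fin (d + 1) → ℕ) (hn : ∀ i, 1 ≤ n i)
    (F : (i : Fin (d + 1)) → Fin (n i) → Set (EuclideanSpace ℝ (Fin d)))
    (hconv : ∀ i j, Convex ℝ (F i j))
    (h : α * ∏ i, (n i : ℝ) ≤
      (((Finset.univ : Finset ((i : Fin (d + 1)) → Fin (n i))).filter fun g =>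
          (⋂ i, F i (g i)).Nonempty).card : ℝ)) :
    ∃ i : Fin (d + 1), ∃ G : Finset (Fin (n i)),
      (α / (d + 1)) * (n i : ℝ) ≤ (G.card : ℝ) ∧ (⋂ j ∈ G, F i j).Nonempty :=
  fractional_colorful_helly_general d α n hn F hconv h
end
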